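/- arXiv:2201.00198 — 5 statements merged into one kernel-verified Lean document; each statement's English description precedes it below -/
import Mathlib

section
/- Let M be a real symmetric matrix whose induced signed graph Γ = (G,σ) is connected, and let f be an eigenvector of M corresponding to an eigenvalue λ. Let D_1,…,D_m be the weak nodal domains of f and, for each i, define g_i(x) = f(x) if x ∈ D_i and g_i(x) = 0 otherwise. If g := Σ_{i=1}^m a_i g_i (with a_1,…,a_m ∈ ℝ) is an eigenvector of M corresponding to λ, then a_1 = a_2 = ⋯ = a_m. -/
open Matrix Polynomial

section NodalDefs

variable {V : Type*}

/-- The product of the signature over consecutive pairs of a list of vertices. -/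
noncomputable def chainSign (σ : V → V → ℝ) (l : List V) : ℝ :=
  ((l.zip l.tail).map fun p => σ p.1 p.2).prod

/-- One step of a strong nodal domain walk. -/
def SWalkStep (G : SimpleGraph V) (σ : V → V → ℝ) (f : V → ℝ) (u v : V) : Prop :=
  G.Adj u v ∧ 0 < f u * σ u v * f v

/-- `x` and `y` are connected by a strong nodal domain walk (S-walk). -/
def SConn (G : SimpleGraph V) (σ : V → V → ℝ) (f : V → ℝ) (x y : V) : Prop :=
  ∃ l : List V, 2 ≤ l.length ∧ l.Chain' (SWalkStep G σ f) ∧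
    l.head? = some x ∧ l.getLast? = some y

/-- The strong nodal domain (as a vertex set) containing the non-zero `w`. -/
def strongClass (G : SimpleGraph V) (σ : V → V → ℝ) (f : V → ℝ) (w : V) : Set V :=
  {x | f x ≠ 0 ∧ (x = w ∨ SConn G σ f x w)}

/-- The set of strong nodal domains (as vertex sets) of `f`. -/
def strongDomains (G : SimpleGraph V) (σ : V → V → ℝ) (f : V → ℝ) : Set (Set V) :=
  {D | ∃ w, f w ≠ 0 ∧ D = strongClass G σ f w}

/-- 𝔖(f): the number of strong nodal domains of `f`. -/
noncomputable def numStrong (G : SimpleGraph V) (σ : V → V → ℝ) (f : V → ℝ) : ℕ :=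
  Nat.card (strongDomains G σ f)

/-- A list of vertices is a weak nodal domain walk (W-walk). -/
def IsWWalk (G : SimpleGraph V) (σ : V → V → ℝ) (f : V → ℝ) (l : List V) : Prop :=
  2 ≤ l.length ∧ l.Chain' G.Adj ∧
    ∀ i j : Fin l.length, i < j → f (l.get i) ≠ 0 → f (l.get j) ≠ 0 →
      (∀ k : Fin l.length, i < k → k < j → f (l.get k) = 0) →
      0 < f (l.get i) * chainSign σ ((l.drop i.val).take (j.val - i.val + 1)) * f (l.get j)

/-- `x` and `y` are connected by a weak nodal domain walk (W-walk). -/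
def WConn (G : SimpleGraph V) (σ : V → V → ℝ) (f : V → ℝ) (x y : V) : Prop :=
  ∃ l : List V, IsWWalk G σ f l ∧ l.head? = some x ∧ l.getLast? = some y

/-- The weak nodal domain (as a vertex set) associated with the class of the non-zero `w`:
the class `W` of `w` together with all vertices having a W-walk to some vertex of `W`. -/
def weakClass (G : SimpleGraph V) (σ : V → V → ℝ) (f : V → ℝ) (w : V) : Set V :=
  {x | (f x ≠ 0 ∧ (x = w ∨ WConn G σ f x w)) ∨
       ∃ u, f u ≠ 0 ∧ (u = w ∨ WConn G σ f u w) ∧ WConn G σ f x u}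

/-- The set of weak nodal domains (as vertex sets) of `f`. -/
def weakDomains (G : SimpleGraph V) (σ : V → V → ℝ) (f : V → ℝ) : Set (Set V) :=
  {D | ∃ w, f w ≠ 0 ∧ D = weakClass G σ f w}

/-- 𝔚(f): the number of weak nodal domains of `f`. -/
noncomputable def numWeak (G : SimpleGraph V) (σ : V → V → ℝ) (f : V → ℝ) : ℕ :=
  Nat.card (weakDomains G σ f)

/-- `σ` is a valid signature on `G`: symmetric and ±1-valued on edges. -/
def IsSignature (G : SimpleGraph V) (σ : V → V → ℝ) : Prop :=
  (∀ x y, σ x y = σ y x) ∧ ∀ x y, G.Adj x y → σ x y = 1 ∨ σ x y = -1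

/-- `M` is compatible with the signed graph `(G, σ)`: `(G, σ)` is the induced
signed graph of `M`. -/
def Compatible (M : Matrix V V ℝ) (G : SimpleGraph V) (σ : V → V → ℝ) : Prop :=
  (∀ x y, G.Adj x y ↔ x ≠ y ∧ M x y ≠ 0) ∧
  (∀ x y, G.Adj x y → σ x y = -(M x y / |M x y|))

/-- A signed graph is balanced if every cycle has positive sign. -/
def IsBalanced (G : SimpleGraph V) (σ : V → V → ℝ) : Prop :=
  ∀ (x : V) (p : G.Walk x x), p.IsCycle → chainSign σ p.support = 1

/-- A signed graph is antibalanced if its negation is balanced. -/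
def IsAntibalanced (G : SimpleGraph V) (σ : V → V → ℝ) : Prop :=
  IsBalanced G (fun x y => -(σ x y))

/-- ℓ(G) = |E| - |V| + c(G), the cyclomatic number of `G`. -/
noncomputable def cyclomatic (G : SimpleGraph V) : ℕ :=
  Nat.card G.edgeSet + Nat.card G.ConnectedComponent - Nat.card V

/-- The subgraph of `G` on the edges `{x,y}` with `f x * σ x y * f y > 0`. -/
def posSubgraph (G : SimpleGraph V) (σ : V → V → ℝ) (f : V → ℝ) : SimpleGraph V where
  Adj x y := G.Adj x y ∧ 0 < f x * σ x y * f y ∧ 0 < f y * σ y x * f x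
  symm := ⟨fun _ _ h => ⟨h.1.symm, h.2.2, h.2.1⟩⟩
  loopless := ⟨fun x h => G.loopless.irrefl x h.1⟩

/-- `x` is tree-like: removing `x` and its incident edges increases the number of
connected components by `d_x - 1`. -/
def IsTreeLike (G : SimpleGraph V) (x : V) : Prop :=
  Nat.card (SimpleGraph.induce {y | y ≠ x} G).ConnectedComponent + 1
    = Nat.card G.ConnectedComponent + Nat.card (G.neighborSet x)

/-- The Fiedler zero set of `f` on `G`. -/
def fiedlerZeroSet (G : SimpleGraph V) (f : V → ℝ) : Set V :=
  {x | f x = 0 ∧ ((∀ y, G.Adj x y → f y = 0) ∨ ¬ IsTreeLike G x)}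

end NodalDefs

/-!
A list is a W-walk exactly when the values `f x_k`, each multiplied by the sign of the walk up to
`x_k`, share one sign at all non-zeros. In this form W-walks can be reversed and concatenated at a
non-zero vertex, so W-connectivity is an equivalence on the support of `f` and every support vertex
lies in exactly one weak nodal domain. Hence `g = B f`, where `B` takes the value `a_i` on the
support of `D_i` and is constant along W-walks.

Let `c` be the maximum of `B` on the support. The eigenvector `(B - c) f` vanishes where `B = c`,
and there all terms of its eigenvalue equation have one sign, so `B = c` spreads along every edge
of the support. At a zero `z` of `f` next to the support, the equation of `f` gives neighbours
`y` with `σ z y f y` of both signs; those of equal sign are W-connected through `z`, and the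
equation of `g` at `z` makes the two coefficients equal. One of these neighbours continues any
path of zeros leaving `z` as a W-walk, so `B = c` also crosses such paths. Since `G` is connected,
`B = c` on the whole support, and every `a_i` equals `c`.
-/

variable {V : Type*}

lemma IsSignature.mul_self_eq_one {G : SimpleGraph V} {σ : V → V → ℝ} (hσ : IsSignature G σ)
    {x y : V} (h : G.Adj x y) : σ x y * σ x y = 1 := by
  rcases hσ.2 x y h with h | h <;> simp [h]

lemma IsSignature.ne_zero {G : SimpleGraph V} {σ : V → V → ℝ} (hσ : IsSignature G σ) {x y : V}
    (h : G.Adj x y) : σ x y ≠ 0 :=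
  left_ne_zero_of_mul_eq_one (hσ.mul_self_eq_one h)

section ChainSign

variable (σ : V → V → ℝ)

@[simp]
lemma chainSign_nil : chainSign σ [] = 1 := rfl

@[simp]
lemma chainSign_singleton (x : V) : chainSign σ [x] = 1 := rfl

@[simp]
lemma chainSign_cons_cons (x y : V) (l : List V) :
    chainSign σ (x :: y :: l) = σ x y * chainSign σ (y :: l) := by
  simp [chainSign]

lemma chainSign_append_cons (l₁ l₂ : List V) (x : V) :
    chainSign σ (l₁ ++ x :: l₂) = chainSign σ (l₁ ++ [x]) * chainSign σ (x :: l₂) := by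
  induction l₁ with
  | nil => simp
  | cons a l₁ ih => cases l₁ <;> simp_all [mul_assoc]

lemma chainSign_reverse (hσ : ∀ x y, σ x y = σ y x) (l : List V) :
    chainSign σ l.reverse = chainSign σ l := by
  induction l with
  | nil => rfl
  | cons x l ih =>
    cases l with
    | nil => rfl
    | cons y l =>
      rw [List.reverse_cons, List.reverse_cons, List.append_assoc, List.singleton_append,
        chainSign_append_cons, ← List.reverse_cons, ih]
      simp [hσ x y, mul_comm]

noncomputable def prefixSign (l : List V) (k : ℕ) : ℝ :=
  chainSign σ (l.take (k + 1))

@[simp]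
lemma prefixSign_zero (l : List V) : prefixSign σ l 0 = 1 := by
  cases l <;> rfl

variable {σ}

lemma chainSign_eq_prefixSign_mul {l : List V} {k : ℕ} (hk : k < l.length) :
    chainSign σ l = prefixSign σ l k * chainSign σ (l.drop k) := by
  conv_lhs => rw [← List.take_append_drop k l, List.drop_eq_getElem_cons hk]
  rw [chainSign_append_cons, List.take_concat_get' l k hk, ← List.drop_eq_getElem_cons hk,
    prefixSign]

lemma prefixSign_eq_mul_chainSign {l : List V} {i j : ℕ} (hij : i ≤ j) (hj : j < l.length) :
    prefixSign σ l j = prefixSign σ l i * chainSign σ ((l.drop i).take (j - i + 1)) := by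
  have hi : i < (l.take (j + 1)).length := by simp; omega
  rw [prefixSign, chainSign_eq_prefixSign_mul hi, prefixSign, List.take_take, List.drop_take,
    Nat.min_eq_left (by omega), show j + 1 - i = j - i + 1 by omega]
  rfl

lemma chainSign_mul_self {G : SimpleGraph V} (hσ : IsSignature G σ) {l : List V}
    (hl : l.IsChain G.Adj) : chainSign σ l * chainSign σ l = 1 := by
  induction l with
  | nil => simp
  | cons x l ih =>
    cases l with
    | nil => simp
    | cons y l =>
      obtain ⟨hxy, hl⟩ := List.isChain_cons_cons.mp hl
      rw [chainSign_cons_cons]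
      linear_combination (σ x y * σ x y) * ih hl + hσ.mul_self_eq_one hxy

end ChainSign

section WWalk

variable {G : SimpleGraph V} {σ : V → V → ℝ} {f : V → ℝ}

lemma chainSign_drop_take (hσ : IsSignature G σ) {l : List V} (hl : l.IsChain G.Adj) {i j : ℕ}
    (hij : i ≤ j) (hj : j < l.length) :
    chainSign σ ((l.drop i).take (j - i + 1)) = prefixSign σ l i * prefixSign σ l j := by
  have hsq : prefixSign σ l i * prefixSign σ l i = 1 := chainSign_mul_self hσ (hl.take _)
  rw [prefixSign_eq_mul_chainSign hij hj]
  linear_combination (-chainSign σ ((l.drop i).take (j - i + 1))) * hsq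

def SignCoherent (σ : V → V → ℝ) (f : V → ℝ) (s : ℝ) (l : List V) : Prop :=
  ∀ k (hk : k < l.length), f l[k] ≠ 0 → 0 < s * (f l[k] * prefixSign σ l k)

lemma isWWalk_of_signCoherent (hσ : IsSignature G σ) {l : List V} (hlen : 2 ≤ l.length)
    (hl : l.IsChain G.Adj) {s : ℝ} (hs : SignCoherent σ f s l) : IsWWalk G σ f l := by
  refine ⟨hlen, hl, fun i j hij hi hj _ => ?_⟩
  simp only [List.get_eq_getElem] at hi hj ⊢
  rw [chainSign_drop_take hσ hl hij.le j.isLt]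
  nlinarith [mul_pos (hs i i.isLt hi) (hs j j.isLt hj), sq_nonneg s]

lemma IsWWalk.mul_pos_of_lt (hσ : IsSignature G σ) {l : List V} (hW : IsWWalk G σ f l) :
    ∀ {i j : ℕ} (hi : i < l.length) (hj : j < l.length), i < j → f l[i] ≠ 0 → f l[j] ≠ 0 →
      0 < f l[i] * prefixSign σ l i * (f l[j] * prefixSign σ l j) := by
  suffices ∀ d i j (hi : i < l.length) (hj : j < l.length), j - i = d → i < j → f l[i] ≠ 0 →
      f l[j] ≠ 0 → 0 < f l[i] * prefixSign σ l i * (f l[j] * prefixSign σ l j) from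
    fun {i j} hi hj => this _ i j hi hj rfl
  intro d
  induction d using Nat.strong_induction_on with
  | _ d ih =>
    intro i j hi hj hd hij hfi hfj
    by_cases hmid : ∃ k, i < k ∧ k < j ∧ ∃ hk : k < l.length, f l[k] ≠ 0
    · obtain ⟨k, hik, hkj, hk, hfk⟩ := hmid
      have hleft := ih (k - i) (by omega) i k hi hk rfl hik hfi hfk
      have hright := ih (j - k) (by omega) k j hk hj rfl hkj hfk hfj
      nlinarith [mul_pos hleft hright, sq_nonneg (f l[k] * prefixSign σ l k)]
    · push Not at hmid
      have hstep := hW.2.2 ⟨i, hi⟩ ⟨j, hj⟩ hij hfi hfj fun k hik hkj => hmid k hik hkj k.isLt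
      simp only [List.get_eq_getElem] at hstep
      rw [chainSign_drop_take hσ hW.2.1 hij.le hj] at hstep
      linarith

lemma IsWWalk.exists_signCoherent (hσ : IsSignature G σ) {l : List V} (hW : IsWWalk G σ f l) :
    ∃ s, SignCoherent σ f s l := by
  by_cases h : ∃ k, ∃ hk : k < l.length, f l[k] ≠ 0
  · obtain ⟨k, hk, hfk⟩ := h
    refine ⟨f l[k] * prefixSign σ l k, fun j hj hfj => ?_⟩
    rcases lt_trichotomy k j with hkj | rfl | hjk
    · exact hW.mul_pos_of_lt hσ hk hj hkj hfk hfj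
    · have hsq : prefixSign σ l k * prefixSign σ l k = 1 := chainSign_mul_self hσ (hW.2.1.take _)
      nlinarith [mul_self_pos.mpr hfk]
    · rw [mul_comm]
      exact hW.mul_pos_of_lt hσ hj hk hjk hfj hfk
  · push Not at h
    exact ⟨1, fun k hk hfk => absurd (h k hk) hfk⟩

lemma SignCoherent.reverse (hσ : IsSignature G σ) {l : List V} (hl : l.IsChain G.Adj) {s : ℝ}
    (hs : SignCoherent σ f s l) : SignCoherent σ f (s * chainSign σ l) l.reverse := by
  intro k hk hfk
  have hm : l.length - 1 - k < l.length := by simp at hk; omega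
  have hpre : prefixSign σ l.reverse k =
      prefixSign σ l (l.length - 1 - k) * chainSign σ l := by
    have hsq : prefixSign σ l (l.length - 1 - k) * prefixSign σ l (l.length - 1 - k) = 1 :=
      chainSign_mul_self hσ (hl.take _)
    rw [prefixSign, List.take_reverse, chainSign_reverse σ hσ.1,
      chainSign_eq_prefixSign_mul hm, show l.length - (k + 1) = l.length - 1 - k by omega]
    linear_combination (-chainSign σ (l.drop (l.length - 1 - k))) * hsq
  rw [List.getElem_reverse] at hfk ⊢
  rw [hpre]
  convert hs _ hm hfk using 1
  linear_combination (s * (f l[l.length - 1 - k] * prefixSign σ l (l.length - 1 - k))) *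
    chainSign_mul_self hσ hl

lemma SignCoherent.append {A rest : List V} {y : V} (hy : f y ≠ 0) {s₁ s₂ : ℝ}
    (hs₁ : SignCoherent σ f s₁ (A ++ [y])) (hs₂ : SignCoherent σ f s₂ (y :: rest)) :
    SignCoherent σ f s₁ (A ++ y :: rest) := by
  intro k hk hfk
  by_cases hkA : k < A.length
  · have hget : (A ++ y :: rest)[k] = (A ++ [y])[k]'(by simp; omega) := by
      simp [List.getElem_append_left hkA]
    have hpre : prefixSign σ (A ++ y :: rest) k = prefixSign σ (A ++ [y]) k := by
      simp only [prefixSign, List.take_append_of_le_length (show k + 1 ≤ A.length by omega)]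
    rw [hget] at hfk ⊢
    rw [hpre]
    exact hs₁ k (by simp; omega) hfk
  · obtain ⟨j, rfl⟩ : ∃ j, k = A.length + j := ⟨k - A.length, by omega⟩
    have hj : j < (y :: rest).length := by simp at hk ⊢; omega
    have hget : (A ++ y :: rest)[A.length + j] = (y :: rest)[j] := by
      rw [List.getElem_append_right (by omega)]
      simp
    have hpre : prefixSign σ (A ++ y :: rest) (A.length + j) =
        chainSign σ (A ++ [y]) * prefixSign σ (y :: rest) j := by
      rw [prefixSign, show A.length + j + 1 = A.length + (j + 1) by omega,
        List.take_length_add_append, List.take_succ_cons, chainSign_append_cons]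
      rfl
    have hjoin := hs₁ A.length (by simp) (by simpa using hy)
    have hstart := hs₂ 0 (by simp) (by simpa using hy)
    rw [hget] at hfk ⊢
    rw [hpre]
    simp only [List.getElem_concat_length, prefixSign,
      List.take_of_length_le (show (A ++ [y]).length ≤ A.length + 1 by simp)] at hjoin
    simp only [List.getElem_cons_zero, prefixSign_zero] at hstart
    nlinarith [mul_pos hjoin (hs₂ j hj hfk)]

lemma WConn.symm (hσ : IsSignature G σ) {x y : V} (h : WConn G σ f x y) : WConn G σ f y x := by
  obtain ⟨l, hW, hx, hy⟩ := h
  obtain ⟨s, hs⟩ := hW.exists_signCoherent hσ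
  exact ⟨l.reverse, isWWalk_of_signCoherent hσ (by simpa using hW.1)
    (List.isChain_reverse.mpr (hW.2.1.imp fun _ _ h => h.symm)) (hs.reverse hσ hW.2.1),
    by simpa using hy, by simpa using hx⟩

lemma WConn.trans (hσ : IsSignature G σ) {x y z : V} (hy : f y ≠ 0) (h₁ : WConn G σ f x y)
    (h₂ : WConn G σ f y z) : WConn G σ f x z := by
  obtain ⟨l₁, hW₁, hx, hy₁⟩ := h₁
  obtain ⟨l₂, hW₂, hy₂, hz⟩ := h₂
  obtain ⟨s₁, hs₁⟩ := hW₁.exists_signCoherent hσ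
  obtain ⟨s₂, hs₂⟩ := hW₂.exists_signCoherent hσ
  obtain ⟨A, rfl⟩ := List.getLast?_eq_some_iff.mp hy₁
  obtain ⟨rest, rfl⟩ := List.head?_eq_some_iff.mp hy₂
  have hA : 1 ≤ A.length := by simpa using hW₁.1
  refine ⟨A ++ y :: rest, isWWalk_of_signCoherent hσ (by simp; omega) ?_ (hs₁.append hy hs₂),
    ?_, by simpa using hz⟩
  · simpa using hW₁.2.1.append_overlap (l₂ := [y]) (l₃ := rest)
      (hW₂.2.1 : (y :: rest).IsChain G.Adj) (by simp)
  · cases A with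
    | nil => simp at hA
    | cons a A => simpa using hx

end WWalk

section WeakDomains

variable {G : SimpleGraph V} {σ : V → V → ℝ} {f : V → ℝ}

lemma wconn_of_interior_eq_zero {x v : V} {zs : List V} (hl : (x :: (zs ++ [v])).IsChain G.Adj)
    (hzs : ∀ z ∈ zs, f z = 0) (hsign : 0 < f x * chainSign σ (x :: (zs ++ [v])) * f v) :
    WConn G σ f x v := by
  refine ⟨x :: (zs ++ [v]), ⟨by simp, hl, fun i j hij hi hj _ => ?_⟩, rfl,
    by rw [← List.cons_append, List.getLast?_concat]⟩
  have hends : ∀ k (hk : k < (x :: (zs ++ [v])).length), f (x :: (zs ++ [v]))[k] ≠ 0 →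
      k = 0 ∨ k = zs.length + 1 := by
    intro k hk hfk
    by_contra hmid
    simp at hk hmid
    obtain ⟨k, rfl⟩ : ∃ k', k = k' + 1 := ⟨k - 1, by omega⟩
    have hkzs : k < zs.length := by omega
    apply hfk
    simpa [List.getElem_append_left hkzs] using hzs _ (List.getElem_mem hkzs)
  obtain ⟨i, hi'⟩ := i
  obtain ⟨j, hj'⟩ := j
  obtain ⟨rfl, rfl⟩ : i = 0 ∧ j = zs.length + 1 := by
    have hij : i < j := hij
    rcases hends i hi' hi with h | h <;> rcases hends j hj' hj with h' | h' <;> omega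
  simpa [List.take_of_length_le] using hsign

lemma weakClass_subset_of_wconn (hσ : IsSignature G σ) {w w' : V} (hw : f w ≠ 0)
    (h : WConn G σ f w w') : weakClass G σ f w ⊆ weakClass G σ f w' := by
  have hreach : ∀ u, (u = w ∨ WConn G σ f u w) → (u = w' ∨ WConn G σ f u w') := by
    rintro u (rfl | hu)
    exacts [Or.inr h, Or.inr (hu.trans hσ hw h)]
  rintro x (⟨hx, hxw⟩ | ⟨u, hu, huw, hxu⟩)
  exacts [Or.inl ⟨hx, hreach x hxw⟩, Or.inr ⟨u, hu, hreach u huw, hxu⟩]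

lemma mem_weakClass_iff (hσ : IsSignature G σ) {x w : V} (hx : f x ≠ 0) (hw : f w ≠ 0) :
    x ∈ weakClass G σ f w ↔ weakClass G σ f x = weakClass G σ f w := by
  refine ⟨fun h => ?_, fun h => h ▸ Or.inl ⟨hx, Or.inl rfl⟩⟩
  obtain rfl | hxw : x = w ∨ WConn G σ f x w := by
    rcases h with ⟨_, h⟩ | ⟨u, hu, rfl | huw, hxu⟩
    exacts [h, Or.inr hxu, Or.inr (hxu.trans hσ hu huw)]
  · rfl
  · exact (weakClass_subset_of_wconn hσ hx hxw).antisymm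
      (weakClass_subset_of_wconn hσ hw (hxw.symm hσ))

lemma exists_ne_zero_mem_of_mem_weakDomains {D : Set V} (hD : D ∈ weakDomains G σ f) :
    ∃ x, f x ≠ 0 ∧ x ∈ D := by
  obtain ⟨w, hw, rfl⟩ := hD
  exact ⟨w, hw, Or.inl ⟨hw, Or.inl rfl⟩⟩

lemma eq_of_mem_weakDomains (hσ : IsSignature G σ) {D D' : Set V} (hD : D ∈ weakDomains G σ f)
    (hD' : D' ∈ weakDomains G σ f) {x : V} (hx : f x ≠ 0) (h : x ∈ D) (h' : x ∈ D') : D = D' := by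
  obtain ⟨w, hw, rfl⟩ := hD
  obtain ⟨w', hw', rfl⟩ := hD'
  rw [← (mem_weakClass_iff hσ hx hw).mp h, (mem_weakClass_iff hσ hx hw').mp h']

lemma mem_weakDomains_iff_of_wconn (hσ : IsSignature G σ) {D : Set V}
    (hD : D ∈ weakDomains G σ f) {u v : V} (hu : f u ≠ 0) (hv : f v ≠ 0)
    (huv : WConn G σ f u v) : u ∈ D ↔ v ∈ D := by
  obtain ⟨w, hw, rfl⟩ := hD
  have huv' : weakClass G σ f u = weakClass G σ f v :=
    (mem_weakClass_iff hσ hu hv).mp (Or.inl ⟨hu, Or.inr huv⟩)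
  rw [mem_weakClass_iff hσ hu hw, mem_weakClass_iff hσ hv hw, huv']

lemma sum_indicator_eq_of_mem (hσ : IsSignature G σ) {ι : Type*} [Fintype ι] {D : ι → Set V}
    (hD : ∀ i, D i ∈ weakDomains G σ f) (hinj : Function.Injective D) (a : ι → ℝ) {x : V}
    (hx : f x ≠ 0) {i : ι} (hxi : x ∈ D i) : ∑ k, (D k).indicator (fun _ => a k) x = a i := by
  rw [Finset.sum_eq_single i (fun k _ hki => Set.indicator_of_notMem
      (fun hxk => hki (hinj (eq_of_mem_weakDomains hσ (hD k) (hD i) hx hxk hxi))) _) (by simp),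
    Set.indicator_of_mem hxi]

end WeakDomains

lemma eq_of_sum_eq_zero_of_sum_mul_eq_zero {ι : Type*} [Fintype ι] {T B : ι → ℝ}
    (hT : ∑ k, T k = 0) (hTB : ∑ k, T k * B k = 0) (hsame : ∀ k k', 0 < T k * T k' → B k = B k')
    {i j : ι} (hi : T i ≠ 0) (hj : T j ≠ 0) : B i = B j := by
  rcases (mul_ne_zero hi hj).lt_or_gt with hij | hij
  -- `∑ T (B - B i) = 0` collapses to `B j - B i` times the sum of the terms of the sign of `T j`.
  · have hterm : ∀ k, T k * (B k - B i) * T j =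
        (B j - B i) * if 0 < T k * T j then T k * T j else 0 := by
      intro k
      split_ifs with hk
      · rw [hsame k j hk]
        ring
      · rcases eq_or_ne (T k) 0 with h0 | h0
        · simp [h0]
        · have hki : 0 < T k * T i := by
            have hkj : T k * T j < 0 := lt_of_le_of_ne (not_lt.mp hk) (mul_ne_zero h0 hj)
            nlinarith [mul_pos_of_neg_of_neg hkj hij, sq_nonneg (T j)]
          rw [hsame k i hki]
          ring
    have hsum : (B j - B i) * ∑ k, (if 0 < T k * T j then T k * T j else 0) = 0 := by
      simp only [Finset.mul_sum, ← hterm, ← Finset.sum_mul, mul_sub, Finset.sum_sub_distrib, hTB,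
        hT, zero_mul, sub_zero]
    have hpos : 0 < ∑ k, (if 0 < T k * T j then T k * T j else 0) := by
      refine lt_of_lt_of_le ?_ (Finset.single_le_sum (fun k _ => ?_) (Finset.mem_univ j))
      · simp [mul_self_pos.mpr hj]
      · split_ifs with h <;> linarith
    linarith [(mul_eq_zero.mp hsum).resolve_right hpos.ne']
  · exact hsame i j hij

section Compatible

variable {M : Matrix V V ℝ} {G : SimpleGraph V} {σ : V → V → ℝ}

lemma Compatible.apply_of_ne (hc : Compatible M G σ) {x y : V} (hxy : x ≠ y) :
    M x y = -(σ x y * |M x y|) := by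
  by_cases h : G.Adj x y
  · rw [hc.2 x y h, neg_mul, neg_neg, div_mul_cancel₀ _ (abs_ne_zero.mpr ((hc.1 x y).mp h).2)]
  · have h0 : M x y = 0 := by
      by_contra hM
      exact h ((hc.1 x y).mpr ⟨hxy, hM⟩)
    simp [h0]

lemma Compatible.abs_pos_of_adj (hc : Compatible M G σ) {x y : V} (h : G.Adj x y) : 0 < |M x y| :=
  abs_pos.mpr ((hc.1 x y).mp h).2

lemma Compatible.adj_of_mul_ne_zero (hc : Compatible M G σ) {F : V → ℝ} {x y : V} (hx : F x = 0)
    (h : σ x y * |M x y| * F y ≠ 0) : G.Adj x y := by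
  refine (hc.1 x y).mpr ⟨?_, abs_ne_zero.mp (right_ne_zero_of_mul (left_ne_zero_of_mul h))⟩
  rintro rfl
  exact h (by rw [hx, mul_zero])

lemma Compatible.sum_eq_zero_of_eigen [Fintype V] (hc : Compatible M G σ) {F : V → ℝ} {lam : ℝ}
    (hF : M *ᵥ F = lam • F) {x : V} (hx : F x = 0) : ∑ y, σ x y * |M x y| * F y = 0 := by
  have hrow : ∑ y, M x y * F y = 0 := by
    simpa [Matrix.mulVec, dotProduct, hx] using congrFun hF x
  rw [← neg_eq_zero, ← hrow, ← Finset.sum_neg_distrib]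
  refine Finset.sum_congr rfl fun y _ => ?_
  rcases eq_or_ne x y with rfl | hxy
  · simp [hx]
  · linear_combination (-F y) * hc.apply_of_ne hxy

end Compatible

section UniqueContinuation

variable [Fintype V] {M : Matrix V V ℝ} {G : SimpleGraph V} {σ : V → V → ℝ} {f B : V → ℝ}
  {lam : ℝ}

lemma exists_adj_mul_pos_of_eq_zero (hσ : IsSignature G σ) (hc : Compatible M G σ)
    (hf : M *ᵥ f = lam • f) {z x : V} (hz : f z = 0) (hzx : G.Adj z x) (hx : f x ≠ 0) {s : ℝ}
    (hs : s ≠ 0) : ∃ u, G.Adj z u ∧ 0 < σ z u * f u * s := by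
  have hsum : ∑ y, σ z y * |M z y| * f y * s = 0 := by
    rw [← Finset.sum_mul, hc.sum_eq_zero_of_eigen hf hz, zero_mul]
  have hxs : σ z x * |M z x| * f x * s ≠ 0 :=
    mul_ne_zero (mul_ne_zero (mul_ne_zero (hσ.ne_zero hzx) (hc.abs_pos_of_adj hzx).ne') hx) hs
  obtain ⟨u, -, hu⟩ :=
    Finset.exists_pos_of_sum_zero_of_exists_nonzero _ hsum ⟨x, Finset.mem_univ x, hxs⟩
  have hzu := hc.adj_of_mul_ne_zero hz (left_ne_zero_of_mul hu.ne')
  refine ⟨u, hzu, (mul_pos_iff_of_pos_left (hc.abs_pos_of_adj hzu)).mp ?_⟩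
  convert hu using 1
  ring

variable (hσ : IsSignature G σ) (hc : Compatible M G σ) (hf : M *ᵥ f = lam • f)
  (hB : ∀ u v, f u ≠ 0 → f v ≠ 0 → WConn G σ f u v → B u = B v)
  (hBf : M *ᵥ (B * f) = lam • (B * f))
include hσ hc hf hB hBf

lemma eq_of_adj_of_eq_zero {z y y' : V} (hz : f z = 0) (hy : G.Adj z y) (hy' : G.Adj z y')
    (hfy : f y ≠ 0) (hfy' : f y' ≠ 0) : B y = B y' := by
  have hT : ∀ {k}, G.Adj z k → f k ≠ 0 → σ z k * |M z k| * f k ≠ 0 := fun hk hfk =>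
    mul_ne_zero (mul_ne_zero (hσ.ne_zero hk) (hc.abs_pos_of_adj hk).ne') hfk
  refine eq_of_sum_eq_zero_of_sum_mul_eq_zero (T := fun k => σ z k * |M z k| * f k)
    (hc.sum_eq_zero_of_eigen hf hz) ?_ (fun k k' hkk' => ?_) (hT hy hfy) (hT hy' hfy')
  · rw [← hc.sum_eq_zero_of_eigen hBf (show (B * f) z = 0 by simp [hz])]
    exact Finset.sum_congr rfl fun k _ => by simp only [Pi.mul_apply]; ring
  have hk := hc.adj_of_mul_ne_zero hz (left_ne_zero_of_mul hkk'.ne')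
  have hk' := hc.adj_of_mul_ne_zero hz (right_ne_zero_of_mul hkk'.ne')
  refine hB k k' (right_ne_zero_of_mul (left_ne_zero_of_mul hkk'.ne'))
    (right_ne_zero_of_mul (right_ne_zero_of_mul hkk'.ne'))
    (wconn_of_interior_eq_zero (zs := [z]) (List.IsChain.cons_cons hk.symm
      (List.isChain_pair.mpr hk')) (by simpa using hz) ?_)
  have hpos : 0 < σ z k * f k * (σ z k' * f k') :=
    (mul_pos_iff_of_pos_left (mul_pos (hc.abs_pos_of_adj hk) (hc.abs_pos_of_adj hk'))).mp
      (by linarith)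
  show 0 < f k * chainSign σ [k, z, k'] * f k'
  rw [chainSign_cons_cons, chainSign_cons_cons, chainSign_singleton, hσ.1 k z]
  convert hpos using 1
  ring

lemma eq_of_adj_of_forall_le {u v : V} (hu : f u ≠ 0) (hmax : ∀ y, f y ≠ 0 → B y ≤ B u)
    (huv : G.Adj u v) (hv : f v ≠ 0) : B v = B u := by
  set F : V → ℝ := fun y => (B y - B u) * f y
  have hF : M *ᵥ F = lam • F := by
    have hF' : F = B * f - B u • f := by
      funext y
      simp only [F, Pi.sub_apply, Pi.mul_apply, Pi.smul_apply, smul_eq_mul]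
      ring
    rw [hF', Matrix.mulVec_sub, Matrix.mulVec_smul, hBf, hf, smul_sub, smul_comm]
  have hsum : ∑ y, f u * (σ u y * |M u y| * F y) = 0 := by
    rw [← Finset.mul_sum, hc.sum_eq_zero_of_eigen hF (by simp [F]), mul_zero]
  have hnonneg : ∀ y ∈ Finset.univ, 0 ≤ f u * (σ u y * |M u y| * F y) := by
    intro y _
    by_contra hneg
    push Not at hneg
    have huy := hc.adj_of_mul_ne_zero (F := F) (by simp [F]) (right_ne_zero_of_mul hneg.ne)
    have hfy : f y ≠ 0 := fun h => by simp [F, h] at hneg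
    have hlt : B y < B u := (hmax y hfy).lt_of_ne fun h => by simp [F, h] at hneg
    have hwc : WConn G σ f u y := by
      refine wconn_of_interior_eq_zero (zs := []) (List.isChain_pair.mpr huy) (by simp) ?_
      simp only [List.nil_append, chainSign_cons_cons, chainSign_singleton, mul_one]
      nlinarith [mul_pos (hc.abs_pos_of_adj huy) (sub_pos.mpr hlt)]
    exact hlt.ne (hB u y hu hfy hwc).symm
  have hv0 := (Finset.sum_eq_zero_iff_of_nonneg hnonneg).mp hsum v (Finset.mem_univ v)
  have hne : f u * σ u v * |M u v| * f v ≠ 0 :=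
    mul_ne_zero (mul_ne_zero (mul_ne_zero hu (hσ.ne_zero huv)) (hc.abs_pos_of_adj huv).ne') hv
  have := (mul_eq_zero.mp (show f u * σ u v * |M u v| * f v * (B v - B u) = 0 by
    linear_combination hv0)).resolve_left hne
  linarith

lemma eq_of_zero_path {x v : V} {zs : List V} (hne : zs ≠ [])
    (hl : (x :: (zs ++ [v])).IsChain G.Adj) (hzs : ∀ z ∈ zs, f z = 0) (hx : f x ≠ 0)
    (hv : f v ≠ 0) : B x = B v := by
  obtain ⟨z, zs, rfl⟩ := List.exists_cons_of_ne_nil hne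
  obtain ⟨hxz, htail⟩ := List.isChain_cons_cons.mp hl
  have hz : f z = 0 := hzs z (by simp)
  set s := chainSign σ (z :: (zs ++ [v])) * f v
  have hs : s ≠ 0 := mul_ne_zero (left_ne_zero_of_mul_eq_one (chainSign_mul_self hσ htail)) hv
  obtain ⟨u, hzu, hu⟩ := exists_adj_mul_pos_of_eq_zero hσ hc hf hz hxz.symm hx hs
  have hfu : f u ≠ 0 := fun h => by simp [h] at hu
  have huv : WConn G σ f u v := by
    refine wconn_of_interior_eq_zero (zs := z :: zs) (List.IsChain.cons_cons hzu.symm htail) hzs ?_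
    rw [List.cons_append, chainSign_cons_cons, hσ.1 u z]
    convert hu using 1
    ring
  rw [eq_of_adj_of_eq_zero hσ hc hf hB hBf hz hxz.symm hzu hx hfu, hB u v hfu hv huv]

lemma eq_of_reachable_of_forall_le {w x : V} (hw : f w ≠ 0) (hmax : ∀ y, f y ≠ 0 → B y ≤ B w)
    (hwx : G.Reachable w x) (hx : f x ≠ 0) : B x = B w := by
  let P : V → Prop := fun y => (f y ≠ 0 ∧ B y = B w) ∨ (f y = 0 ∧ ∃ x₀ zs, f x₀ ≠ 0 ∧
    B x₀ = B w ∧ (∀ z ∈ zs, f z = 0) ∧ (x₀ :: (zs ++ [y])).IsChain G.Adj)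
  have hstep : ∀ y y', P y → G.Adj y y' → P y' := by
    rintro y y' (⟨hy, hBy⟩ | ⟨hy, x₀, zs, hx₀, hBx₀, hzs, hl⟩) hyy'
    · by_cases hy' : f y' = 0
      · exact Or.inr ⟨hy', y, [], hy, hBy, by simp, List.isChain_pair.mpr hyy'⟩
      · refine Or.inl ⟨hy', ?_⟩
        rw [eq_of_adj_of_forall_le hσ hc hf hB hBf hy (fun z hz => hBy ▸ hmax z hz) hyy' hy', hBy]
    · have hl' : (x₀ :: ((zs ++ [y]) ++ [y'])).IsChain G.Adj := by
        simpa using hl.append_overlap (l₁ := x₀ :: zs) (l₂ := [y])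
          (l₃ := [y']) (List.isChain_pair.mpr hyy') (by simp)
      have hzs' : ∀ z ∈ zs ++ [y], f z = 0 := by
        simpa [or_imp, forall_and, hy] using hzs
      by_cases hy' : f y' = 0
      · exact Or.inr ⟨hy', x₀, zs ++ [y], hx₀, hBx₀, hzs', hl'⟩
      · refine Or.inl ⟨hy', ?_⟩
        rw [← eq_of_zero_path hσ hc hf hB hBf (by simp) hl' hzs' hx₀ hy', hBx₀]
  have hwalk : ∀ a b (p : G.Walk a b), P a → P b := by
    intro a b p
    induction p with
    | nil => exact id
    | cons h _ ih => exact fun ha => ih (hstep _ _ ha h)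
  obtain ⟨p⟩ := hwx
  rcases hwalk _ _ p (Or.inl ⟨hw, rfl⟩) with ⟨_, h⟩ | ⟨h, _⟩
  exacts [h, absurd h hx]

theorem eq_of_mulVec_mul_eq_smul (hconn : G.Connected) {u v : V} (hu : f u ≠ 0) (hv : f v ≠ 0) :
    B u = B v := by
  classical
  obtain ⟨w, hw, hmax⟩ := Finset.exists_max_image {y | f y ≠ 0} B ⟨u, by simpa using hu⟩
  simp only [Finset.mem_filter, Finset.mem_univ, true_and] at hw hmax
  rw [eq_of_reachable_of_forall_le hσ hc hf hB hBf hw hmax (hconn.preconnected w u) hu,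
    eq_of_reachable_of_forall_le hσ hc hf hB hBf hw hmax (hconn.preconnected w v) hv]

end UniqueContinuation

theorem stmt_12_general (n : ℕ) (M : Matrix (Fin n) (Fin n) ℝ)
    (G : SimpleGraph (Fin n)) (σ : Fin n → Fin n → ℝ)
    (hσ : IsSignature G σ) (hcompat : Compatible M G σ) (hconn : G.Connected)
    (lam : ℝ) (f : Fin n → ℝ) (heig : M.mulVec f = lam • f)
    (m : ℕ) (D : Fin m → Set (Fin n))
    (hDmem : ∀ i, D i ∈ weakDomains G σ f)
    (hDinj : Function.Injective D)
    (a : Fin m → ℝ)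
    (g : Fin n → ℝ) (hg : g = fun x => ∑ i, a i * (D i).indicator f x)
    (hgeig : M.mulVec g = lam • g) :
    ∀ i j, a i = a j := by
  classical
  set B : Fin n → ℝ := fun x => ∑ k, (D k).indicator (fun _ => a k) x
  have hgB : g = B * f := by
    subst hg
    funext x
    simp only [Pi.mul_apply, B, Finset.sum_mul]
    exact Finset.sum_congr rfl fun k _ => by by_cases hx : x ∈ D k <;> simp [hx]
  have hBW : ∀ u v, f u ≠ 0 → f v ≠ 0 → WConn G σ f u v → B u = B v := fun u v hu hv huv =>
    Finset.sum_congr rfl fun k _ => by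
      simp only [Set.indicator_apply, mem_weakDomains_iff_of_wconn hσ (hDmem k) hu hv huv]
  intro i j
  obtain ⟨x, hx, hxi⟩ := exists_ne_zero_mem_of_mem_weakDomains (hDmem i)
  obtain ⟨y, hy, hyj⟩ := exists_ne_zero_mem_of_mem_weakDomains (hDmem j)
  rw [← sum_indicator_eq_of_mem hσ hDmem hDinj a hx hxi,
    ← sum_indicator_eq_of_mem hσ hDmem hDinj a hy hyj]
  exact eq_of_mulVec_mul_eq_smul hσ hcompat heig hBW (hgB ▸ hgeig) hconn hx hy

/-- discrete unique continuation through weak nodal domains. -/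
theorem stmt_12 (n : ℕ) (M : Matrix (Fin n) (Fin n) ℝ) (hM : M.IsSymm)
    (G : SimpleGraph (Fin n)) (σ : Fin n → Fin n → ℝ)
    (hσ : IsSignature G σ) (hcompat : Compatible M G σ) (hconn : G.Connected)
    (lam : ℝ) (f : Fin n → ℝ) (hf : f ≠ 0) (heig : M.mulVec f = lam • f)
    (m : ℕ) (D : Fin m → Set (Fin n))
    (hDmem : ∀ i, D i ∈ weakDomains G σ f)
    (hDall : ∀ W ∈ weakDomains G σ f, ∃ i, D i = W)
    (hDinj : Function.Injective D)
    (a : Fin m → ℝ)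
    (g : Fin n → ℝ) (hg : g = fun x => ∑ i, a i * (D i).indicator f x)
    (hgne : g ≠ 0) (hgeig : M.mulVec g = lam • g) :
    ∀ i j, a i = a j :=
  stmt_12_general n M G σ hσ hcompat hconn lam f heig m D hDmem hDinj a g hg hgeig
end

section
/- Let A be an n×n acyclic real symmetric matrix with induced signed graph Γ = (T,σ), T = (V,E). Let λ be an eigenvalue of A with multiplicity r and eigenvector f : V → ℝ. Let F := {x ∈ V : f(x) = 0 and f(y) = 0 for all y ∼ x}, and let r̃ be the multiplicity of λ as an eigenvalue of the matrix Ã obtained from A by deleting all rows and columns with indices in F. Then r ≥ r̃ and r̃ = e_0 − 2z + c + |F|, where z = |{x ∈ V : f(x) = 0}|, e_0 = |{{x,y} ∈ E : f(x) = 0 or f(y) = 0}|, and c is the number of connected components of T. -/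
open Matrix Polynomial

/-!
Put `B = A - λ I`, so that `B f = 0`. Since the graph is a forest, every edge `uv` is a bridge;
summing the antisymmetric form `B x y (f x g y - g x f y)` over the side of `uv` containing `v`
leaves only the term of the edge itself, so `f u g v = f v g u` whenever `f * (B g) = 0`. Hence a
kernel vector of `Ã`, extended by zero, is a kernel vector of `B` vanishing wherever `f` does
(which gives `r̃ ≤ r`), and these are exactly the vectors equal to a multiple of `f` on each
component of the support of `f`, subject to one linear condition at each zero with a nonzero
neighbour. Those conditions are independent: in a forest, some support component is joined by a
single edge to the zeros carrying a given nontrivial relation, and its indicator isolates that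
edge. Hence `r̃` = #support components - #such zeros, and `|E| + c = n` for the forest and for its
support subgraph turns this into `e₀ - 2z + c + |F|`.
-/

open Finset

namespace SimpleGraph

variable {V : Type*} {G : SimpleGraph V}

lemma Reachable.eq_of_forall_adj {β : Sort*} {ν : V → β} (h : ∀ a b, G.Adj a b → ν a = ν b)
    {u v : V} (huv : G.Reachable u v) : ν u = ν v := by
  obtain ⟨p⟩ := huv
  induction p with
  | nil => rfl
  | cons hab _ ih => exact (h _ _ hab).trans ih

lemma Reachable.eq_of_forall_not_adj {u v : V} (hu : ∀ w, ¬ G.Adj u w)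
    (huv : G.Reachable u v) : u = v := by
  obtain ⟨_ | ⟨h, _⟩⟩ := huv
  · rfl
  · exact absurd h (hu _)

lemma card_connectedComponent_deleteEdges_of_isBridge [Finite V] {u v : V} (huv : G.Adj u v)
    (hb : G.IsBridge s(u, v)) :
    Nat.card (G.deleteEdges {s(u, v)}).ConnectedComponent = Nat.card G.ConnectedComponent + 1 := by
  classical
  set G' := G.deleteEdges {s(u, v)}
  have hne : G'.connectedComponentMk u ≠ G'.connectedComponentMk v :=
    fun h => hb (ConnectedComponent.exact h)
  let π := ConnectedComponent.map (Hom.ofLE (deleteEdges_le {s(u, v)} : G' ≤ G))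
  -- `κ` identifies the component of `v` with that of `u`, so it is also constant across `uv`
  let κ (x : V) : {c : G'.ConnectedComponent // c ≠ G'.connectedComponentMk v} :=
    if hx : G'.connectedComponentMk x = G'.connectedComponentMk v then ⟨_, hne⟩ else ⟨_, hx⟩
  have hκ : ∀ a b, G.Adj a b → κ a = κ b := by
    intro a b hab
    by_cases he : s(a, b) = s(u, v)
    · rcases Sym2.eq_iff.1 he with ⟨rfl, rfl⟩ | ⟨rfl, rfl⟩ <;> simp [κ]
    · have : G'.Adj a b := by simp [G', hab, he]
      simp only [κ, ConnectedComponent.connectedComponentMk_eq_of_adj this]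
  have e : G.ConnectedComponent ≃ {c : G'.ConnectedComponent // c ≠ G'.connectedComponentMk v} :=
    { toFun := ConnectedComponent.lift κ fun _ _ p _ => p.reachable.eq_of_forall_adj hκ
      invFun := fun c => π c
      left_inv := by
        refine ConnectedComponent.ind fun x => ?_
        show π (κ x) = G.connectedComponentMk x
        by_cases hx : G'.connectedComponentMk x = G'.connectedComponentMk v
        · simp only [κ, dif_pos hx]
          exact ConnectedComponent.sound (huv.reachable.trans
            ((ConnectedComponent.exact hx).symm.mono (deleteEdges_le _)))
        · simp only [κ, dif_neg hx]
          rfl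
      right_inv := by
        rintro ⟨c, hc⟩
        induction c using ConnectedComponent.ind with
        | h x =>
          show κ x = _
          simp only [κ, dif_neg hc] }
  rw [← Nat.card_congr (Equiv.optionSubtypeNe (G'.connectedComponentMk v)), Finite.card_option,
    Nat.card_congr e]

theorem IsAcyclic.card_edgeSet_add_card_connectedComponent [Finite V] (hG : G.IsAcyclic) :
    Nat.card G.edgeSet + Nat.card G.ConnectedComponent = Nat.card V := by
  induction hk : Nat.card G.edgeSet generalizing G with
  | zero =>
    have hbot : G = ⊥ := by
      rw [← edgeSet_eq_empty, ← Set.ncard_eq_zero, ← Nat.card_coe_set_eq, hk]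
    subst hbot
    rw [zero_add]
    exact Nat.card_congr (Equiv.ofBijective _ ⟨fun x y h => reachable_bot.1
      (ConnectedComponent.exact h), Quot.mk_surjective⟩).symm
  | succ k ih =>
    obtain ⟨e, he⟩ : G.edgeSet.Nonempty := Set.nonempty_of_ncard_ne_zero (by
      rw [← Nat.card_coe_set_eq, hk]; omega)
    induction e using Sym2.ind with
    | _ u v =>
    have hcard : Nat.card (G.deleteEdges {s(u, v)}).edgeSet = k := by
      rw [edgeSet_deleteEdges, Nat.card_coe_set_eq, Set.ncard_sdiff_singleton_of_mem he,
        ← Nat.card_coe_set_eq, hk, Nat.add_sub_cancel]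
    have := ih (hG.anti (deleteEdges_le _)) hcard
    rw [card_connectedComponent_deleteEdges_of_isBridge he
      (isAcyclic_iff_forall_isBridge.1 hG he)] at this
    omega

lemma eq_and_eq_of_adj_of_reachable_deleteEdges {u v x y : V}
    (hx : (G.deleteEdges {s(u, v)}).Reachable x v) (hy : ¬ (G.deleteEdges {s(u, v)}).Reachable y v)
    (hxy : G.Adj x y) : x = v ∧ y = u := by
  by_cases he : s(x, y) = s(u, v)
  · rcases Sym2.eq_iff.1 he with ⟨rfl, rfl⟩ | ⟨rfl, rfl⟩
    · exact absurd .rfl hy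
    · exact ⟨rfl, rfl⟩
  · have : (G.deleteEdges {s(u, v)}).Adj y x := by simp [hxy.symm, Sym2.eq_swap, he]
    exact absurd (this.reachable.trans hx) hy

lemma card_connectedComponent_add_one_le [Finite V] {H H' : SimpleGraph V} (hle : H ≤ H')
    {S : Set H.ConnectedComponent} (hS : S.Nonempty)
    (hnew : ∀ a b, H'.Adj a b → ¬ H.Adj a b → H.connectedComponentMk a ∈ S) :
    Nat.card H.ConnectedComponent + 1 ≤ Nat.card H'.ConnectedComponent + Nat.card S := by
  have hreach : ∀ x y, H'.Reachable x y → H.connectedComponentMk x ∉ S → H.Reachable x y := by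
    rintro x y ⟨p⟩ hx
    induction p with
    | nil => rfl
    | cons hxz _ ih =>
      have hH : H.Adj _ _ := by_contra fun h => hx (hnew _ _ hxz h)
      exact hH.reachable.trans
        (ih (by rwa [← ConnectedComponent.connectedComponentMk_eq_of_adj hH]))
  let π := ConnectedComponent.map (Hom.ofLE hle)
  have hπ : ∀ c ∉ S, ∀ c', π c = π c' → c = c' := by
    intro c hc c' h
    induction c using ConnectedComponent.ind
    induction c' using ConnectedComponent.ind
    exact ConnectedComponent.sound (hreach _ _ (ConnectedComponent.exact h) hc)
  obtain ⟨c₀, hc₀⟩ := hS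
  have hinj : Function.Injective fun o : Option ↥Sᶜ => o.elim (π c₀) fun c => π c := by
    rintro (_ | ⟨c, hc⟩) (_ | ⟨c', hc'⟩) h
    · rfl
    · exact absurd (hπ c' hc' c₀ h.symm ▸ hc₀) hc'
    · exact absurd (hπ c hc c₀ h ▸ hc₀) hc
    · exact congrArg some (Subtype.ext (hπ c hc c' h))
  have hcompl := Set.ncard_add_ncard_compl S
  rw [← Nat.card_coe_set_eq, ← Nat.card_coe_set_eq] at hcompl
  have := Nat.card_le_card_of_injective _ hinj
  rw [Finite.card_option] at this
  omega

variable (G) (f : V → ℝ)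

def supportGraph : SimpleGraph V where
  Adj x y := G.Adj x y ∧ f x ≠ 0 ∧ f y ≠ 0
  symm := ⟨fun _ _ h => ⟨h.1.symm, h.2.2, h.2.1⟩⟩
  loopless := ⟨fun x h => G.loopless.irrefl x h.1⟩

def supportComponents : Set (G.supportGraph f).ConnectedComponent :=
  (G.supportGraph f).connectedComponentMk '' {x | f x ≠ 0}

def interiorZeros : Set V := {x | f x = 0 ∧ ∀ y, G.Adj x y → f y = 0}

def boundaryZeros : Set V := {x | f x = 0 ∧ ∃ y, G.Adj x y ∧ f y ≠ 0}

variable {G f}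

lemma supportGraph_le : G.supportGraph f ≤ G := fun _ _ h => h.1

lemma supportGraph_adj_iff {x y : V} :
    (G.supportGraph f).Adj x y ↔ G.Adj x y ∧ f x ≠ 0 ∧ f y ≠ 0 :=
  Iff.rfl

lemma eq_of_supportGraph_reachable {x y : V} (hx : f x = 0)
    (h : (G.supportGraph f).Reachable x y) : x = y :=
  h.eq_of_forall_not_adj fun _ (hxy : (G.supportGraph f).Adj _ _) => hxy.2.1 hx

lemma mem_boundaryZeros_or_mem_interiorZeros {x : V} (hx : f x = 0) :
    x ∈ G.boundaryZeros f ∨ x ∈ G.interiorZeros f := by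
  by_cases h : ∃ y, G.Adj x y ∧ f y ≠ 0
  · exact Or.inl ⟨hx, h⟩
  · push Not at h
    exact Or.inr ⟨hx, h⟩

lemma card_boundaryZeros_add_card_interiorZeros [Finite V] :
    Nat.card (G.boundaryZeros f) + Nat.card (G.interiorZeros f) = Nat.card {x | f x = 0} := by
  rw [Nat.card_coe_set_eq, Nat.card_coe_set_eq, Nat.card_coe_set_eq, ← Set.ncard_union_eq]
  · congr 1
    ext x
    refine ⟨?_, mem_boundaryZeros_or_mem_interiorZeros⟩
    rintro (hx | hx) <;> exact hx.1
  · exact Set.disjoint_left.2 fun x ⟨_, y, hxy, hy⟩ hi => hy (hi.2 y hxy)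

lemma eq_zero_of_mem_boundaryZeros {g : V → ℝ}
    (hfg : ∀ u v, G.Adj u v → f u * g v = f v * g u) {x : V} (hx : x ∈ G.boundaryZeros f) :
    g x = 0 := by
  obtain ⟨hx0, y, hxy, hy⟩ := hx
  have := hfg x y hxy
  rw [hx0, zero_mul] at this
  exact (mul_eq_zero.1 this.symm).resolve_left hy

lemma card_connectedComponent_supportGraph [Finite V] :
    Nat.card (G.supportGraph f).ConnectedComponent
      = Nat.card (G.supportComponents f) + Nat.card {x | f x = 0} := by
  set mk := (G.supportGraph f).connectedComponentMk
  have hcompl : (G.supportComponents f)ᶜ = mk '' {x | f x = 0} := by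
    ext c
    induction c using ConnectedComponent.ind with
    | h x =>
      constructor
      · exact fun hc => ⟨x, by_contra fun hx => hc ⟨x, hx, rfl⟩, rfl⟩
      · rintro ⟨z, hz, hzx⟩ ⟨y, hy, hyx⟩
        exact hy (eq_of_supportGraph_reachable hz
          (ConnectedComponent.exact (hzx.trans hyx.symm)) ▸ hz)
  have hinj : Set.InjOn mk {x | f x = 0} := fun x hx _ _ h =>
    eq_of_supportGraph_reachable hx (ConnectedComponent.exact h)
  rw [Nat.card_coe_set_eq, Nat.card_coe_set_eq, ← hinj.ncard_image, ← hcompl,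
    Set.ncard_add_ncard_compl]

lemma card_edgeSet_supportGraph_add_card [Finite V] :
    Nat.card (G.supportGraph f).edgeSet
      + Nat.card {e : Sym2 V | e ∈ G.edgeSet ∧ ∃ x ∈ e, f x = 0} = Nat.card G.edgeSet := by
  have hsupp : (G.supportGraph f).edgeSet = G.edgeSet \ {e | ∃ x ∈ e, f x = 0} := by
    ext e
    induction e using Sym2.ind with
    | _ a b => simp [supportGraph_adj_iff, and_comm]
  rw [hsupp, Nat.card_coe_set_eq, Nat.card_coe_set_eq, Nat.card_coe_set_eq, add_comm]
  exact Set.ncard_inter_add_ncard_sdiff_eq_ncard _ _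

theorem IsAcyclic.card_supportComponents_add_card [Finite V] (hG : G.IsAcyclic) :
    Nat.card (G.supportComponents f) + Nat.card {x | f x = 0}
      = Nat.card {e : Sym2 V | e ∈ G.edgeSet ∧ ∃ x ∈ e, f x = 0}
        + Nat.card G.ConnectedComponent := by
  have hG' := (hG.anti supportGraph_le).card_edgeSet_add_card_connectedComponent
    (G := G.supportGraph f)
  have := hG.card_edgeSet_add_card_connectedComponent
  have := card_edgeSet_supportGraph_add_card (G := G) (f := f)
  rw [card_connectedComponent_supportGraph] at hG'
  omega

variable (G f) in
open scoped Classical in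
noncomputable def supportNeighbors [Fintype V] (Λ : Finset V) : Finset (V × V) :=
  {p ∈ Λ ×ˢ univ | G.Adj p.1 p.2 ∧ f p.2 ≠ 0}

lemma mem_supportNeighbors [Fintype V] {Λ : Finset V} {p : V × V} :
    p ∈ G.supportNeighbors f Λ ↔ p.1 ∈ Λ ∧ G.Adj p.1 p.2 ∧ f p.2 ≠ 0 := by
  simp [supportNeighbors]

open scoped Classical in
theorem IsAcyclic.card_supportNeighbors_lt [Fintype V] (hG : G.IsAcyclic)
    {Λ : Finset V} (hΛ : Λ.Nonempty) (hΛ0 : ∀ s ∈ Λ, f s = 0) :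
    #(G.supportNeighbors f Λ) <
      #((G.supportNeighbors f Λ).image fun p => (G.supportGraph f).connectedComponentMk p.2)
        + #Λ := by
  set H := G.supportGraph f
  set P := G.supportNeighbors f Λ
  set E : Set (Sym2 V) := ↑(P.image fun p => s(p.1, p.2))
  have hEG : E ⊆ G.edgeSet := by
    intro e he
    obtain ⟨p, hp, rfl⟩ := Finset.mem_image.1 he
    exact (mem_supportNeighbors.1 hp).2.1
  have hEdiag : Disjoint E Sym2.diagSet :=
    Set.disjoint_left.2 fun e he hd => G.not_isDiag_of_mem_edgeSet (hEG he) hd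
  have hcardE : E.ncard = #P := by
    rw [Set.ncard_coe_finset, Finset.card_image_of_injOn]
    rintro ⟨a, b⟩ hp ⟨c, d⟩ hq h
    have hp := mem_supportNeighbors.1 hp
    have hq := mem_supportNeighbors.1 hq
    rcases Sym2.eq_iff.1 h with ⟨rfl, rfl⟩ | ⟨rfl, rfl⟩
    · rfl
    · exact absurd (hΛ0 _ hp.1) hq.2.2
  -- `H` and `H'` are forests, so `#P` is the number of components lost from `H` to `H'`; only
  -- components in `S` can merge
  set H' := H ⊔ fromEdgeSet E
  have hH'G : H' ≤ G := sup_le supportGraph_le ((fromEdgeSet_le _).2 (Set.sdiff_subset.trans hEG))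
  have hedges : Nat.card H'.edgeSet = Nat.card H.edgeSet + #P := by
    have hdisj : Disjoint H.edgeSet E := Set.disjoint_left.2 fun e he he' => by
      obtain ⟨p, hp, rfl⟩ := Finset.mem_image.1 he'
      exact he.2.1 (hΛ0 _ (mem_supportNeighbors.1 hp).1)
    rw [edgeSet_sup, edgeSet_fromEdgeSet, sdiff_eq_left.2 hEdiag, Nat.card_coe_set_eq,
      Set.ncard_union_eq hdisj, hcardE, Nat.card_coe_set_eq]
  set S : Finset H.ConnectedComponent :=
    P.image (fun p => H.connectedComponentMk p.2) ∪ Λ.image H.connectedComponentMk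
  have hHH' : H ≤ H' := le_sup_left
  have hmerge := card_connectedComponent_add_one_le hHH' (S := ↑S)
    (by simpa [S] using Or.inr hΛ) (by
      rintro a b (hab | ⟨he, hne⟩) hnot
      · exact absurd hab hnot
      · obtain ⟨⟨s, y⟩, hp, hsy⟩ := Finset.mem_image.1 he
        rcases Sym2.eq_iff.1 hsy with ⟨rfl, rfl⟩ | ⟨rfl, rfl⟩
        · exact Finset.mem_union_right _
            (Finset.mem_image_of_mem _ (mem_supportNeighbors.1 hp).1)
        · exact Finset.mem_union_left _
            (Finset.mem_image_of_mem (fun p => H.connectedComponentMk p.2) hp))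
  have hS : #S ≤ #(P.image fun p => H.connectedComponentMk p.2) + #Λ :=
    (card_union_le _ _).trans (Nat.add_le_add_left card_image_le _)
  have hH := (hG.anti supportGraph_le).card_edgeSet_add_card_connectedComponent (G := H)
  have hH' := (hG.anti hH'G).card_edgeSet_add_card_connectedComponent
  rw [Nat.card_coe_set_eq, Set.ncard_coe_finset] at hmerge
  omega

theorem IsAcyclic.exists_adj_supportComponent_unique [Fintype V] (hG : G.IsAcyclic)
    {Λ : Finset V} (hΛ : Λ.Nonempty) (hΛ0 : ∀ s ∈ Λ, f s = 0)
    (hΛ2 : ∀ s ∈ Λ, ∃ y₁ y₂, y₁ ≠ y₂ ∧ G.Adj s y₁ ∧ f y₁ ≠ 0 ∧ G.Adj s y₂ ∧ f y₂ ≠ 0) :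
    ∃ s ∈ Λ, ∃ y, G.Adj s y ∧ f y ≠ 0 ∧ ∀ s' ∈ Λ, ∀ y', G.Adj s' y' → f y' ≠ 0 →
      (G.supportGraph f).connectedComponentMk y' = (G.supportGraph f).connectedComponentMk y →
        s' = s ∧ y' = y := by
  classical
  have hcount := hG.card_supportNeighbors_lt hΛ hΛ0
  set mk := (G.supportGraph f).connectedComponentMk
  set P := G.supportNeighbors f Λ
  by_contra! hcon
  -- every fibre of both projections of `P` has at least two elements
  have hcomp : 2 * #(P.image fun p => mk p.2) ≤ #P := by
    refine mul_card_image_le_card _ _ fun c hc => ?_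
    obtain ⟨⟨s, y⟩, hp, rfl⟩ := Finset.mem_image.1 hc
    obtain ⟨hs, hsy, hy⟩ := mem_supportNeighbors.1 hp
    obtain ⟨s', hs', y', hsy', hy', hmk, hne⟩ := hcon s hs y hsy hy
    refine Finset.one_lt_card.2 ⟨(s', y'), ?_, (s, y), ?_, fun h => hne ?_ ?_⟩
    · exact Finset.mem_filter.2 ⟨mem_supportNeighbors.2 ⟨hs', hsy', hy'⟩, hmk⟩
    · exact Finset.mem_filter.2 ⟨hp, rfl⟩
    · exact congrArg Prod.fst h
    · exact congrArg Prod.snd h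
  have hzero : 2 * #Λ ≤ #P := by
    have himage : P.image Prod.fst = Λ := by
      ext s
      refine ⟨fun h => ?_, fun hs => ?_⟩
      · obtain ⟨p, hp, rfl⟩ := Finset.mem_image.1 h
        exact (mem_supportNeighbors.1 hp).1
      · obtain ⟨y, -, -, hsy, hy, -⟩ := hΛ2 s hs
        exact Finset.mem_image.2 ⟨(s, y), mem_supportNeighbors.2 ⟨hs, hsy, hy⟩, rfl⟩
    rw [← himage]
    refine mul_card_image_le_card _ _ fun s hs => ?_
    obtain ⟨y₁, y₂, hne, h₁, hy₁, h₂, hy₂⟩ := hΛ2 s (himage ▸ hs)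
    refine Finset.one_lt_card.2 ⟨(s, y₁), ?_, (s, y₂), ?_, by simp [hne]⟩
    · exact Finset.mem_filter.2 ⟨mem_supportNeighbors.2 ⟨himage ▸ hs, h₁, hy₁⟩, rfl⟩
    · exact Finset.mem_filter.2 ⟨mem_supportNeighbors.2 ⟨himage ▸ hs, h₂, hy₂⟩, rfl⟩
  omega

end SimpleGraph

open SimpleGraph

lemma Matrix.mulVec_extend_apply {R V W : Type*} [CommSemiring R] [Fintype V] [Fintype W]
    (B : Matrix V V R) {e : W → V} (he : Function.Injective e) (g : W → R) (i : W) :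
    (B *ᵥ Function.extend e g 0) (e i) = (B.submatrix e e *ᵥ g) i := by
  simp only [mulVec, dotProduct, submatrix_apply]
  refine (Fintype.sum_of_injective e he _ _ (fun y hy => ?_) fun j => ?_).symm
  · rw [Function.extend_apply' _ _ _ (by simpa using hy), Pi.zero_apply, mul_zero]
  · rw [he.extend_apply]

lemma LinearMap.surjective_of_dotProduct_eq_zero {K X ι : Type*} [Field K] [AddCommGroup X]
    [Module K X] [Fintype ι] [DecidableEq ι] (M : X →ₗ[K] ι → K)
    (h : ∀ ξ : ι → K, (∀ t, ξ ⬝ᵥ M t = 0) → ξ = 0) : Function.Surjective M := by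
  rw [← LinearMap.dualMap_injective_iff, injective_iff_map_eq_zero]
  intro φ hφ
  have hdot : ∀ v, (dotProductEquiv K ι).symm φ ⬝ᵥ v = φ v := fun v => by
    conv_rhs => rw [← (dotProductEquiv K ι).apply_symm_apply φ]
    rfl
  have := h ((dotProductEquiv K ι).symm φ) fun t => by
    simpa [hdot] using congrArg (fun ψ : Module.Dual K X => ψ t) hφ
  simpa using congrArg (dotProductEquiv K ι) this

lemma Finset.sum_sum_eq_zero_of_antisymm {ι R : Type*} [NonAssocRing R] [NoZeroDivisors R]
    [CharZero R] {s : Finset ι} {w : ι → ι → R} (hw : ∀ x y, w x y = -w y x) :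
    ∑ x ∈ s, ∑ y ∈ s, w x y = 0 := by
  have : ∑ x ∈ s, ∑ y ∈ s, w x y = -∑ x ∈ s, ∑ y ∈ s, w x y :=
    calc ∑ x ∈ s, ∑ y ∈ s, w x y = ∑ y ∈ s, ∑ x ∈ s, w x y := Finset.sum_comm
      _ = ∑ y ∈ s, ∑ x ∈ s, -w y x :=
        Finset.sum_congr rfl fun y _ => Finset.sum_congr rfl fun x _ => hw x y
      _ = _ := by simp only [Finset.sum_neg_distrib]
  exact CharZero.eq_neg_self_iff.1 this

section DomainLift

variable {V : Type*} {G : SimpleGraph V} {f g : V → ℝ}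

variable (G f) in
noncomputable def domainLift : (G.supportComponents f → ℝ) →ₗ[ℝ] V → ℝ :=
  LinearMap.mulLeft ℝ f ∘ₗ LinearMap.funLeft ℝ ℝ (G.supportGraph f).connectedComponentMk ∘ₗ
    Function.ExtendByZero.linearMap ℝ Subtype.val

lemma domainLift_apply_of_ne_zero (t : G.supportComponents f → ℝ) {y : V} (hy : f y ≠ 0) :
    domainLift G f t y = f y * t ⟨_, y, hy, rfl⟩ := by
  show f y * Function.extend Subtype.val t 0 ((G.supportGraph f).connectedComponentMk y) = _
  rw [Subtype.val_injective.extend_apply t 0 ⟨_, y, hy, rfl⟩]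

lemma domainLift_apply_of_eq_zero (t : G.supportComponents f → ℝ) {y : V} (hy : f y = 0) :
    domainLift G f t y = 0 :=
  show f y * _ = 0 by rw [hy, zero_mul]

lemma domainLift_single_apply [DecidableEq (G.supportGraph f).ConnectedComponent]
    (D : G.supportComponents f) (y : V) :
    domainLift G f (Pi.single D 1) y =
      if (G.supportGraph f).connectedComponentMk y = D then f y else 0 := by
  by_cases hy : f y = 0
  · rw [domainLift_apply_of_eq_zero _ hy, hy, ite_self]
  · rw [domainLift_apply_of_ne_zero _ hy]
    simp only [Pi.single_apply, Subtype.ext_iff]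
    split_ifs <;> simp

lemma domainLift_injective : Function.Injective (domainLift G f) := by
  rw [← LinearMap.ker_eq_bot, LinearMap.ker_eq_bot']
  intro t ht
  funext ⟨c, y, hy, hyc⟩
  subst hyc
  have := congrFun ht y
  rw [domainLift_apply_of_ne_zero t hy, Pi.zero_apply] at this
  exact (mul_eq_zero.1 this).resolve_left hy

lemma exists_domainLift_eq (hfg : ∀ u v, (G.supportGraph f).Adj u v → f u * g v = f v * g u)
    (hg : ∀ x, f x = 0 → g x = 0) : ∃ t, domainLift G f t = g := by
  have hratio : ∀ u v, (G.supportGraph f).Adj u v → g u / f u = g v / f v := fun u v huv => by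
    rw [div_eq_div_iff huv.2.1 huv.2.2]
    linear_combination -hfg u v huv
  let T : (G.supportGraph f).ConnectedComponent → ℝ :=
    ConnectedComponent.lift (fun y => g y / f y) fun _ _ p _ => p.reachable.eq_of_forall_adj hratio
  refine ⟨fun c => T c, funext fun y => ?_⟩
  by_cases hy : f y = 0
  · rw [domainLift_apply_of_eq_zero _ hy, hg y hy]
  · rw [domainLift_apply_of_ne_zero _ hy]
    exact mul_div_cancel₀ (g y) hy

end DomainLift

section Kernel

variable {V : Type*} [Fintype V] {G : SimpleGraph V} {B : Matrix V V ℝ} {f g : V → ℝ}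

theorem SimpleGraph.IsAcyclic.mul_eq_mul_of_adj (hG : G.IsAcyclic) (hB : B.IsSymm)
    (hBG : ∀ x y, G.Adj x y ↔ x ≠ y ∧ B x y ≠ 0) (hf : B *ᵥ f = 0)
    (hg : ∀ x, f x * (B *ᵥ g) x = 0) {u v : V} (huv : G.Adj u v) : f u * g v = f v * g u := by
  classical
  set G' := G.deleteEdges {s(u, v)}
  -- `Q` is the side of the bridge `uv` containing `v`
  set Q : Finset V := {x | G'.Reachable x v}
  have hvQ : v ∈ Q := Finset.mem_filter.2 ⟨Finset.mem_univ _, Reachable.rfl⟩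
  have hcut : ∀ x ∈ Q, ∀ y ∉ Q, B x y ≠ 0 → x = v ∧ y = u := fun x hx y hy hxy =>
    eq_and_eq_of_adj_of_reachable_deleteEdges (Finset.mem_filter.1 hx).2
      (fun h => hy (Finset.mem_filter.2 ⟨Finset.mem_univ _, h⟩))
      ((hBG x y).2 ⟨by rintro rfl; exact hy hx, hxy⟩)
  set w : V → V → ℝ := fun x y => B x y * (f x * g y - g x * f y)
  have hrow : ∀ x, ∑ y, w x y = f x * (B *ᵥ g) x - g x * (B *ᵥ f) x := by
    intro x
    simp only [w, mulVec, dotProduct, Finset.mul_sum, ← Finset.sum_sub_distrib]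
    exact Finset.sum_congr rfl fun y _ => by ring
  have hinner : ∑ x ∈ Q, ∑ y ∈ Q, w x y = 0 :=
    Finset.sum_sum_eq_zero_of_antisymm fun x y => by
      simp only [w]
      rw [hB.apply x y]
      ring
  have hcross : ∑ x ∈ Q, ∑ y ∈ Qᶜ, w x y = w v u := by
    refine (Finset.sum_eq_single_of_mem v hvQ fun x hx hxv => ?_).trans
      (Finset.sum_eq_single_of_mem u ?_ fun y hy hyu => ?_)
    · refine Finset.sum_eq_zero fun y hy => ?_
      by_contra hw
      exact hxv (hcut x hx y (Finset.mem_compl.1 hy) (left_ne_zero_of_mul hw)).1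
    · exact Finset.mem_compl.2 fun hu =>
        isBridge_iff.1 (isAcyclic_iff_forall_adj_isBridge.1 hG huv) (Finset.mem_filter.1 hu).2
    · by_contra hw
      exact hyu (hcut v hvQ y (Finset.mem_compl.1 hy) (left_ne_zero_of_mul hw)).2
  have htotal : ∑ x ∈ Q, ∑ y, w x y = 0 := by simp [hrow, hf, hg]
  simp only [← Finset.sum_add_sum_compl Q (w _), Finset.sum_add_distrib, hinner, hcross,
    zero_add] at htotal
  have hBvu : B v u ≠ 0 := ((hBG v u).1 huv.symm).2
  have := (mul_eq_zero.1 htotal).resolve_left hBvu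
  linarith

lemma mulVec_apply_eq_zero_of_mem_interiorZeros (hBG : ∀ x y, G.Adj x y ↔ x ≠ y ∧ B x y ≠ 0)
    (hg : ∀ y, f y = 0 → g y = 0) {x : V} (hx : x ∈ G.interiorZeros f) : (B *ᵥ g) x = 0 := by
  refine Finset.sum_eq_zero fun y _ => show B x y * g y = 0 from ?_
  by_cases hxy : x = y
  · rw [← hxy, hg x hx.1, mul_zero]
  by_cases hB : B x y = 0
  · rw [hB, zero_mul]
  · rw [hg y (hx.2 y ((hBG x y).2 ⟨hxy, hB⟩)), mul_zero]

lemma exists_two_adj_of_mem_boundaryZeros (hBG : ∀ x y, G.Adj x y ↔ x ≠ y ∧ B x y ≠ 0)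
    (hf : B *ᵥ f = 0) {x : V} (hx : x ∈ G.boundaryZeros f) :
    ∃ y₁ y₂, y₁ ≠ y₂ ∧ G.Adj x y₁ ∧ f y₁ ≠ 0 ∧ G.Adj x y₂ ∧ f y₂ ≠ 0 := by
  obtain ⟨hx0, y₁, hxy₁, hy₁⟩ := hx
  have hterm : B x y₁ * f y₁ ≠ 0 := mul_ne_zero ((hBG x y₁).1 hxy₁).2 hy₁
  -- the row `x` of `B *ᵥ f` vanishes, so it has a second nonzero term
  obtain ⟨y₂, hne, hy₂⟩ : ∃ y₂, y₂ ≠ y₁ ∧ B x y₂ * f y₂ ≠ 0 := by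
    by_contra! h
    exact hterm ((Finset.sum_eq_single y₁ (fun y _ hy => h y hy) (by simp)).symm.trans
      (congrFun hf x))
  have hxy₂ : x ≠ y₂ := by rintro rfl; simp [hx0] at hy₂
  exact ⟨y₁, y₂, hne.symm, hxy₁, hy₁, (hBG x y₂).2 ⟨hxy₂, left_ne_zero_of_mul hy₂⟩,
    right_ne_zero_of_mul hy₂⟩

variable (B f) in
def kerSupportedOn : Submodule ℝ (V → ℝ) :=
  LinearMap.ker B.mulVecLin ⊓ Submodule.pi {x | f x = 0} fun _ => ⊥

lemma mem_kerSupportedOn : g ∈ kerSupportedOn B f ↔ B *ᵥ g = 0 ∧ ∀ x, f x = 0 → g x = 0 := by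
  simp [kerSupportedOn, Submodule.mem_pi]

lemma kerSupportedOn_le : kerSupportedOn B f ≤ LinearMap.ker B.mulVecLin :=
  inf_le_left

lemma mulVec_domainLift_apply_of_ne_zero (hBG : ∀ x y, G.Adj x y ↔ x ≠ y ∧ B x y ≠ 0)
    (hf : B *ᵥ f = 0) (t : G.supportComponents f → ℝ) {x : V} (hx : f x ≠ 0) :
    (B *ᵥ domainLift G f t) x = 0 := by
  have hrow : ∀ y, B x y * domainLift G f t y = B x y * f y * t ⟨_, x, hx, rfl⟩ := by
    intro y
    by_cases hy : f y = 0
    · rw [domainLift_apply_of_eq_zero _ hy, hy]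
      ring
    by_cases hB : B x y = 0
    · rw [hB]
      ring
    have hD : (⟨_, y, hy, rfl⟩ : G.supportComponents f) = ⟨_, x, hx, rfl⟩ := by
      refine Subtype.ext ?_
      rcases eq_or_ne x y with rfl | hxy
      · rfl
      · exact (ConnectedComponent.connectedComponentMk_eq_of_adj
          (⟨(hBG x y).2 ⟨hxy, hB⟩, hx, hy⟩ : (G.supportGraph f).Adj x y)).symm
    rw [domainLift_apply_of_ne_zero _ hy, hD]
    ring
  rw [mulVec, dotProduct, Finset.sum_congr rfl fun y _ => hrow y, ← Finset.sum_mul]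
  exact mul_eq_zero_of_left (congrFun hf x) _

variable (G B f) in
noncomputable def boundaryMap : (G.supportComponents f → ℝ) →ₗ[ℝ] G.boundaryZeros f → ℝ :=
  LinearMap.funLeft ℝ ℝ Subtype.val ∘ₗ B.mulVecLin ∘ₗ domainLift G f

lemma boundaryMap_apply (t : G.supportComponents f → ℝ) (x : G.boundaryZeros f) :
    boundaryMap G B f t x = (B *ᵥ domainLift G f t) x :=
  rfl

theorem map_domainLift_ker_boundaryMap (hG : G.IsAcyclic) (hB : B.IsSymm)
    (hBG : ∀ x y, G.Adj x y ↔ x ≠ y ∧ B x y ≠ 0) (hf : B *ᵥ f = 0) :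
    (LinearMap.ker (boundaryMap G B f)).map (domainLift G f) = kerSupportedOn B f := by
  ext g
  simp only [Submodule.mem_map, LinearMap.mem_ker, mem_kerSupportedOn]
  constructor
  · rintro ⟨t, ht, rfl⟩
    have hzero : ∀ x, f x = 0 → domainLift G f t x = 0 := fun x hx =>
      domainLift_apply_of_eq_zero t hx
    refine ⟨funext fun x => ?_, hzero⟩
    by_cases hx : f x = 0
    · rcases mem_boundaryZeros_or_mem_interiorZeros hx with hxb | hxi
      · exact congrFun ht ⟨x, hxb⟩
      · exact mulVec_apply_eq_zero_of_mem_interiorZeros hBG hzero hxi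
    · exact mulVec_domainLift_apply_of_ne_zero hBG hf t hx
  · rintro ⟨hg, hg0⟩
    obtain ⟨t, rfl⟩ := exists_domainLift_eq
      (fun u v huv => hG.mul_eq_mul_of_adj hB hBG hf (by simp [hg]) huv.1) hg0
    exact ⟨t, funext fun x => congrFun hg x, rfl⟩

theorem boundaryMap_surjective (hG : G.IsAcyclic) (hBG : ∀ x y, G.Adj x y ↔ x ≠ y ∧ B x y ≠ 0)
    (hf : B *ᵥ f = 0) : Function.Surjective (boundaryMap G B f) := by
  classical
  refine LinearMap.surjective_of_dotProduct_eq_zero _ fun ξ hξ => ?_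
  by_contra hne
  set Λ : Finset V := {x | ∃ hx : x ∈ G.boundaryZeros f, ξ ⟨x, hx⟩ ≠ 0}
  have hΛB : ∀ s ∈ Λ, ∃ hs : s ∈ G.boundaryZeros f, ξ ⟨s, hs⟩ ≠ 0 := fun s hs =>
    (Finset.mem_filter.1 hs).2
  have hΛ : Λ.Nonempty := by
    obtain ⟨⟨x, hx⟩, hξx⟩ := Function.ne_iff.1 hne
    exact ⟨x, Finset.mem_filter.2 ⟨Finset.mem_univ _, hx, hξx⟩⟩
  obtain ⟨s, hs, y, hsy, hy, huniq⟩ := hG.exists_adj_supportComponent_unique hΛ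
    (fun s hs => (hΛB s hs).1.1) fun s hs => exists_two_adj_of_mem_boundaryZeros hBG hf (hΛB s hs).1
  obtain ⟨hsB, hξs⟩ := hΛB s hs
  -- test `ξ` against the indicator of the support component of `y`
  set t : G.supportComponents f → ℝ := Pi.single ⟨_, y, hy, rfl⟩ 1
  have hterm : ∀ x ∈ Λ, ∀ z, B x z * domainLift G f t z ≠ 0 → x = s ∧ z = y := by
    intro x hx z hz
    rw [domainLift_single_apply] at hz
    split_ifs at hz with hmk
    · have hfz : f z ≠ 0 := right_ne_zero_of_mul hz
      have hxz : x ≠ z := fun h => hfz (h ▸ (hΛB x hx).1.1)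
      exact huniq x hx z ((hBG x z).2 ⟨hxz, left_ne_zero_of_mul hz⟩) hfz hmk
    · simp at hz
  have hrow : ∀ x ∈ Λ, x ≠ s → (B *ᵥ domainLift G f t) x = 0 := fun x hx hxs =>
    Finset.sum_eq_zero fun z _ => by_contra fun h => hxs (hterm x hx z h).1
  have hrow_s : (B *ᵥ domainLift G f t) s = B s y * f y := by
    rw [mulVec, dotProduct, Finset.sum_eq_single y (fun z _ hzy => by_contra fun h =>
      hzy (hterm s hs z h).2) (by simp), domainLift_single_apply, if_pos rfl]
  have hothers : ∀ b ∈ Finset.univ, b ≠ ⟨s, hsB⟩ → ξ b * boundaryMap G B f t b = 0 := by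
    rintro ⟨b, hb⟩ - hbs
    by_cases hξb : ξ ⟨b, hb⟩ = 0
    · rw [hξb, zero_mul]
    · rw [boundaryMap_apply, hrow b (Finset.mem_filter.2 ⟨Finset.mem_univ _, hb, hξb⟩)
        fun h => hbs (Subtype.ext h), mul_zero]
  have := hξ t
  rw [dotProduct, Finset.sum_eq_single ⟨s, hsB⟩ hothers (by simp), boundaryMap_apply,
    hrow_s] at this
  exact mul_ne_zero hξs (mul_ne_zero ((hBG s y).1 hsy).2 hy) this

theorem finrank_kerSupportedOn_add_card_boundaryZeros (hG : G.IsAcyclic) (hB : B.IsSymm)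
    (hBG : ∀ x y, G.Adj x y ↔ x ≠ y ∧ B x y ≠ 0) (hf : B *ᵥ f = 0) :
    Module.finrank ℝ (kerSupportedOn B f) + Nat.card (G.boundaryZeros f)
      = Nat.card (G.supportComponents f) := by
  classical
  have hrank := LinearMap.finrank_range_add_finrank_ker (boundaryMap G B f)
  rw [LinearMap.range_eq_top.2 (boundaryMap_surjective hG hBG hf), finrank_top,
    Module.finrank_fintype_fun_eq_card, Module.finrank_fintype_fun_eq_card] at hrank
  rw [← map_domainLift_ker_boundaryMap hG hB hBG hf,
    ← (Submodule.equivMapOfInjective _ domainLift_injective _).finrank_eq,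
    Nat.card_eq_fintype_card, Nat.card_eq_fintype_card]
  omega

theorem mem_kerSupportedOn_of_forall_interiorZeros (hG : G.IsAcyclic) (hB : B.IsSymm)
    (hBG : ∀ x y, G.Adj x y ↔ x ≠ y ∧ B x y ≠ 0) (hf : B *ᵥ f = 0)
    (hg0 : ∀ x ∈ G.interiorZeros f, g x = 0) (hgB : ∀ x ∉ G.interiorZeros f, (B *ᵥ g) x = 0) :
    g ∈ kerSupportedOn B f := by
  have hfg : ∀ u v, G.Adj u v → f u * g v = f v * g u := fun _ _ huv =>
    hG.mul_eq_mul_of_adj hB hBG hf (fun x => by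
      by_cases hx : x ∈ G.interiorZeros f
      · rw [hx.1, zero_mul]
      · rw [hgB x hx, mul_zero]) huv
  have hzero : ∀ x, f x = 0 → g x = 0 := fun x hx =>
    (mem_boundaryZeros_or_mem_interiorZeros hx).elim (eq_zero_of_mem_boundaryZeros hfg) (hg0 x)
  refine mem_kerSupportedOn.2 ⟨funext fun x => ?_, hzero⟩
  by_cases hx : x ∈ G.interiorZeros f
  · exact mulVec_apply_eq_zero_of_mem_interiorZeros hBG hzero hx
  · exact hgB x hx

theorem finrank_ker_submatrix_eq [DecidableEq V] (hG : G.IsAcyclic) (hB : B.IsSymm)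
    (hBG : ∀ x y, G.Adj x y ↔ x ≠ y ∧ B x y ≠ 0) (hf : B *ᵥ f = 0) (F : Finset V)
    (hF : ∀ x, x ∈ F ↔ x ∈ G.interiorZeros f) :
    Module.finrank ℝ (LinearMap.ker (B.submatrix (Subtype.val : {x // x ∉ F} → V)
      (Subtype.val : {x // x ∉ F} → V)).mulVecLin) = Module.finrank ℝ (kerSupportedOn B f) := by
  set E := Function.ExtendByZero.linearMap ℝ (Subtype.val : {x // x ∉ F} → V)
  have hEF : ∀ h x, x ∈ F → E h x = 0 := fun h x hx =>
    Function.extend_apply' _ _ _ fun ⟨i, hi⟩ => i.2 (hi ▸ hx)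
  have hEmul : ∀ h (i : {x // x ∉ F}),
      (B *ᵥ E h) i = (B.submatrix (Subtype.val : {x // x ∉ F} → V) Subtype.val *ᵥ h) i :=
    fun h i => B.mulVec_extend_apply Subtype.val_injective h i
  set K := LinearMap.ker (B.submatrix (Subtype.val : {x // x ∉ F} → V)
    (Subtype.val : {x // x ∉ F} → V)).mulVecLin
  suffices hK : K.map E = kerSupportedOn B f by
    rw [← hK]
    exact (Submodule.equivMapOfInjective E
      (Function.extend_injective Subtype.val_injective (0 : V → ℝ)) K).finrank_eq
  ext g
  simp only [K, Submodule.mem_map, LinearMap.mem_ker, mulVecLin_apply]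
  constructor
  · rintro ⟨h, hh, rfl⟩
    exact mem_kerSupportedOn_of_forall_interiorZeros hG hB hBG hf
      (fun x hx => hEF h x ((hF x).2 hx))
      fun x hx => (hEmul h ⟨x, fun h' => hx ((hF x).1 h')⟩).trans (congrFun hh _)
  · intro hg
    obtain ⟨hg, hg0⟩ := mem_kerSupportedOn.1 hg
    have hEg : E (fun i => g i) = g := funext fun x => by
      by_cases hx : x ∈ F
      · rw [hEF _ x hx, hg0 x ((hF x).1 hx).1]
      · exact Subtype.val_injective.extend_apply (fun i : {x // x ∉ F} => g i) 0 ⟨x, hx⟩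
    exact ⟨_, funext fun i => by rw [Pi.zero_apply, ← hEmul, hEg, hg, Pi.zero_apply], hEg⟩

end Kernel

theorem stmt_15_general (n : ℕ) (A : Matrix (Fin n) (Fin n) ℝ) (hA : A.IsSymm)
    (G : SimpleGraph (Fin n)) (σ : Fin n → Fin n → ℝ)
    (hcompat : Compatible A G σ) (hacyclic : G.IsAcyclic)
    (lam : ℝ) (f : Fin n → ℝ) (heig : A.mulVec f = lam • f)
    (F : Finset (Fin n)) (hF : ∀ x, x ∈ F ↔ (f x = 0 ∧ ∀ y, G.Adj x y → f y = 0))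
    (r : ℕ) (hr : r = Module.finrank ℝ
      (LinearMap.ker (A - lam • (1 : Matrix (Fin n) (Fin n) ℝ)).mulVecLin))
    (rt : ℕ) (hrt : rt = Module.finrank ℝ (LinearMap.ker
      ((A.submatrix (fun i : {x : Fin n // x ∉ F} => (i : Fin n))
          (fun i : {x : Fin n // x ∉ F} => (i : Fin n))
        - lam • 1).mulVecLin))) :
    rt ≤ r ∧
    rt + 2 * Nat.card {x : Fin n | f x = 0}
      = Nat.card {e : Sym2 (Fin n) | e ∈ G.edgeSet ∧ ∃ x ∈ e, f x = 0}
        + Nat.card G.ConnectedComponent + F.card := by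
  set B := A - lam • (1 : Matrix (Fin n) (Fin n) ℝ)
  have hB : B.IsSymm := hA.sub (isSymm_one.smul lam)
  have hBG : ∀ x y, G.Adj x y ↔ x ≠ y ∧ B x y ≠ 0 := fun x y => by
    rw [hcompat.1 x y]
    exact and_congr_right fun hxy => by simp [B, one_apply_ne hxy]
  have hf : B *ᵥ f = 0 := by simp [B, sub_mulVec, heig, smul_mulVec]
  have hsub : A.submatrix (fun i : {x // x ∉ F} => (i : Fin n))
      (fun i : {x // x ∉ F} => (i : Fin n)) - lam • 1 = B.submatrix Subtype.val Subtype.val := by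
    simp [B, submatrix_sub, submatrix_smul, submatrix_one _ Subtype.val_injective]
  have hrt' : rt = Module.finrank ℝ (kerSupportedOn B f) := by
    rw [hrt, hsub]
    exact finrank_ker_submatrix_eq hacyclic hB hBG hf F hF
  refine ⟨hrt' ▸ hr ▸ Submodule.finrank_mono kerSupportedOn_le, ?_⟩
  have hdim := finrank_kerSupportedOn_add_card_boundaryZeros hacyclic hB hBG hf
  have hzeros := card_boundaryZeros_add_card_interiorZeros (G := G) (f := f)
  have hforest := hacyclic.card_supportComponents_add_card (f := f)
  have hFcard : F.card = Nat.card (G.interiorZeros f) :=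
    (Nat.card_eq_finsetCard F).symm.trans (Nat.card_congr (Equiv.subtypeEquivRight hF))
  omega

/-- multiplicity formula for acyclic matrices, r ≥ r̃ and
r̃ = e₀ - 2z + c + |F|. -/
theorem stmt_15 (n : ℕ) (A : Matrix (Fin n) (Fin n) ℝ) (hA : A.IsSymm)
    (G : SimpleGraph (Fin n)) (σ : Fin n → Fin n → ℝ)
    (hσ : IsSignature G σ) (hcompat : Compatible A G σ) (hacyclic : G.IsAcyclic)
    (lam : ℝ) (f : Fin n → ℝ) (hf : f ≠ 0) (heig : A.mulVec f = lam • f)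
    (F : Finset (Fin n)) (hF : ∀ x, x ∈ F ↔ (f x = 0 ∧ ∀ y, G.Adj x y → f y = 0))
    (r : ℕ) (hr : r = Module.finrank ℝ
      (LinearMap.ker (A - lam • (1 : Matrix (Fin n) (Fin n) ℝ)).mulVecLin))
    (rt : ℕ) (hrt : rt = Module.finrank ℝ (LinearMap.ker
      ((A.submatrix (fun i : {x : Fin n // x ∉ F} => (i : Fin n))
          (fun i : {x : Fin n // x ∉ F} => (i : Fin n))
        - lam • 1).mulVecLin))) :
    rt ≤ r ∧
    rt + 2 * Nat.card {x : Fin n | f x = 0}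
      = Nat.card {e : Sym2 (Fin n) | e ∈ G.edgeSet ∧ ∃ x ∈ e, f x = 0}
        + Nat.card G.ConnectedComponent + F.card :=
  stmt_15_general n A hA G σ hcompat hacyclic lam f heig F hF r hr rt hrt
end

section
/- Let B = Σ_{i,j=1}^n a_{ij}(x_i − x_j)² be a real quadratic form with a_{ij} = a_{ji} ∈ ℝ. Let G = (V,E) be the graph with V = {1,…,n} and E = {{i,j} : a_{ij} ≠ 0 and i ≠ j}, and let H = (V,E(H)) be the subgraph with E(H) = {{i,j} ∈ E : a_{ij} > 0}. Then for any spanning forest T of H, p ≤ |E(T)| ≤ |E(H)| ≤ p + ℓ, where p is the positive index of inertia of B (the number of positive eigenvalues, with multiplicity, of the symmetric matrix representing B) and ℓ = ℓ(G) := |E| − |V| + c(G), c(G) being the number of connected components of G. -/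
/-!
Write `q x = xᵀ Q x = ∑ a i j (x i - x j)²`. Functions constant along the edges of the spanning
forest `T` form a subspace of dimension at least `n - |E(T)|`; on it every term with `a i j > 0`
vanishes, so `q ≤ 0` there and the subspace meets the `p`-dimensional span of the positive
eigenvectors trivially, whence `p ≤ |E(T)|`. Dually, functions constant along the negative edges
`E(G) \ E(H)` form a subspace of dimension at least `n - |E(G)| + |E(H)|` on which `q ≥ 0`. Its
intersection with the `(n - p)`-dimensional span of the nonpositive eigenvectors consists of
functions with `q x = 0`, which are constant on the components of `G` and so form a space of
dimension at most `c(G)`. Counting dimensions gives `|E(H)| ≤ p + ℓ(G)`.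
-/

open Matrix Polynomial

open Module

section Spectral

variable {ι : Type*} [Fintype ι]

def supportedOn (s : Set ι) : Submodule ℝ (ι → ℝ) :=
  LinearMap.ker (LinearMap.funLeft ℝ ℝ ((↑) : ↥sᶜ → ι))

omit [Fintype ι] in
lemma mem_supportedOn {s : Set ι} {y : ι → ℝ} :
    y ∈ supportedOn s ↔ ∀ i ∉ s, y i = 0 := by
  simp [supportedOn, funext_iff, LinearMap.funLeft_apply]

lemma finrank_supportedOn (s : Set ι) : finrank ℝ (supportedOn s) = Nat.card s := by
  classical
  have hrange : LinearMap.range (LinearMap.funLeft ℝ ℝ ((↑) : ↥sᶜ → ι)) = ⊤ :=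
    LinearMap.range_eq_top.2 (LinearMap.funLeft_surjective_of_injective _ _ _ Subtype.val_injective)
  have hrank :=
    LinearMap.finrank_range_add_finrank_ker (LinearMap.funLeft ℝ ℝ ((↑) : ↥sᶜ → ι))
  rw [hrange, finrank_top, finrank_fintype_fun_eq_card, finrank_fintype_fun_eq_card,
    ← Nat.card_eq_fintype_card, ← Nat.card_eq_fintype_card, Nat.card_coe_set_eq] at hrank
  rw [supportedOn, Nat.card_coe_set_eq]
  have := Set.ncard_add_ncard_compl s
  omega

lemma card_setOf_eq_of_prod_X_sub_C_eq {R : Type*} [CommRing R] [IsDomain R] {μ ν : ι → R}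
    (h : ∏ i, (X - C (μ i)) = ∏ i, (X - C (ν i))) (P : R → Prop) :
    Nat.card {i | P (μ i)} = Nat.card {i | P (ν i)} := by
  classical
  have hroots : Finset.univ.val.map μ = Finset.univ.val.map ν := by
    have hμ := roots_multiset_prod_X_sub_C (Finset.univ.val.map μ)
    have hν := roots_multiset_prod_X_sub_C (Finset.univ.val.map ν)
    rw [Multiset.map_map] at hμ hν
    rw [← hμ, ← hν]
    exact congrArg roots h
  have hcount (f : ι → R) : Nat.card {i | P (f i)} = (Finset.univ.val.map f).countP P := by
    rw [Multiset.countP_map, Nat.card_eq_fintype_card, Fintype.card_subtype]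
    rfl
  rw [hcount, hcount, hroots]

variable [DecidableEq ι] {Q : Matrix ι ι ℝ}

lemma Matrix.IsHermitian.eigenvectorUnitary_dotProduct_mulVec (hQ : Q.IsHermitian)
    (y : ι → ℝ) :
    let x := (hQ.eigenvectorUnitary : Matrix ι ι ℝ) *ᵥ y
    x ⬝ᵥ Q *ᵥ x = ∑ i, hQ.eigenvalues i * y i ^ 2 := by
  intro x
  have hdiag := hQ.conjStarAlgAut_star_eigenvectorUnitary
  simp only [Unitary.conjStarAlgAut_apply, Unitary.coe_star, star_eq_conjTranspose,
    conjTranspose_eq_transpose_of_trivial, transpose_transpose, Function.comp_def,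
    RCLike.ofReal_real_eq_id, id_eq] at hdiag
  rw [dotProduct_comm, dotProduct_mulVec, ← mulVec_transpose, mulVec_mulVec, mulVec_mulVec, hdiag]
  simp only [dotProduct, mulVec_diagonal]
  exact Finset.sum_congr rfl fun i _ => by ring

lemma Matrix.IsHermitian.finrank_map_supportedOn (hQ : Q.IsHermitian) (s : Set ι) :
    finrank ℝ ((supportedOn s).map (hQ.eigenvectorUnitary : Matrix ι ι ℝ).mulVecLin)
      = Nat.card s := by
  rw [← finrank_supportedOn, ← LinearEquiv.finrank_eq (Submodule.equivMapOfInjective _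
    (mulVec_injective_of_isUnit Unitary.isUnit_coe) _)]

lemma Matrix.IsHermitian.exists_finrank_eq_card_pos_eigenvalues (hQ : Q.IsHermitian) :
    ∃ P : Submodule ℝ (ι → ℝ), finrank ℝ P = Nat.card {i | 0 < hQ.eigenvalues i} ∧
      ∀ x ∈ P, x ≠ 0 → 0 < x ⬝ᵥ Q *ᵥ x := by
  refine ⟨_, hQ.finrank_map_supportedOn _, ?_⟩
  rintro _ ⟨y, hy, rfl⟩ hx0
  obtain ⟨j, hj : y j ≠ 0⟩ := Function.ne_iff.1 (fun h : y = 0 => hx0 (by simp [h]))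
  have hjs : 0 < hQ.eigenvalues j := by_contra fun h => hj (mem_supportedOn.1 hy j h)
  rw [Matrix.mulVecLin_apply, hQ.eigenvectorUnitary_dotProduct_mulVec]
  refine Finset.sum_pos' (fun i _ => ?_) ⟨j, Finset.mem_univ _, by positivity⟩
  by_cases hi : 0 < hQ.eigenvalues i
  · positivity
  · simp [mem_supportedOn.1 hy i hi]

lemma Matrix.IsHermitian.exists_finrank_add_card_pos_eigenvalues_eq (hQ : Q.IsHermitian) :
    ∃ N : Submodule ℝ (ι → ℝ),
      finrank ℝ N + Nat.card {i | 0 < hQ.eigenvalues i} = Fintype.card ι ∧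
      ∀ x ∈ N, x ⬝ᵥ Q *ᵥ x ≤ 0 := by
  refine ⟨(supportedOn {i | 0 < hQ.eigenvalues i}ᶜ).map
    (hQ.eigenvectorUnitary : Matrix ι ι ℝ).mulVecLin, ?_, ?_⟩
  · rw [hQ.finrank_map_supportedOn, Nat.card_coe_set_eq,
      Nat.card_coe_set_eq, add_comm, Set.ncard_add_ncard_compl, Nat.card_eq_fintype_card]
  rintro _ ⟨y, hy, rfl⟩
  rw [Matrix.mulVecLin_apply, hQ.eigenvectorUnitary_dotProduct_mulVec]
  refine Finset.sum_nonpos fun i _ => ?_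
  by_cases hi : 0 < hQ.eigenvalues i
  · simp [mem_supportedOn.1 hy i (not_not.2 hi)]
  · exact mul_nonpos_of_nonpos_of_nonneg (not_lt.1 hi) (sq_nonneg _)

end Spectral

namespace SimpleGraph

variable {V : Type*} (K : SimpleGraph V)

def constAlongEdges : Submodule ℝ (V → ℝ) where
  carrier := {x | ∀ ⦃i j⦄, K.Adj i j → x i = x j}
  add_mem' hx hy i j h := by simp [hx h, hy h]
  zero_mem' _ _ _ := rfl
  smul_mem' c x hx i j h := by simp [hx h]

variable {K}

lemma Reachable.eq_of_mem_constAlongEdges {x : V → ℝ} (hx : x ∈ K.constAlongEdges) {u v : V}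
    (h : K.Reachable u v) : x u = x v := by
  obtain ⟨w⟩ := h
  induction w with
  | nil => rfl
  | cons hadj _ ih => exact (hx hadj).trans ih

variable (K) [Finite V]

lemma finrank_constAlongEdges_le :
    finrank ℝ K.constAlongEdges ≤ Nat.card K.ConnectedComponent := by
  have := Fintype.ofFinite K.ConnectedComponent
  have hle :
      K.constAlongEdges ≤ LinearMap.range (LinearMap.funLeft ℝ ℝ K.connectedComponentMk) :=
    fun x hx => ⟨ConnectedComponent.lift x fun _ _ w _ =>
      w.reachable.eq_of_mem_constAlongEdges hx, rfl⟩
  calc finrank ℝ K.constAlongEdges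
      ≤ finrank ℝ (LinearMap.range (LinearMap.funLeft ℝ ℝ K.connectedComponentMk)) :=
        Submodule.finrank_mono hle
    _ ≤ finrank ℝ (K.ConnectedComponent → ℝ) := LinearMap.finrank_range_le _
    _ = Nat.card K.ConnectedComponent := by
        rw [finrank_fintype_fun_eq_card, Nat.card_eq_fintype_card]

lemma card_le_finrank_constAlongEdges_add :
    Nat.card V ≤ finrank ℝ K.constAlongEdges + Nat.card K.edgeSet := by
  have := Fintype.ofFinite V
  have := Fintype.ofFinite K.edgeSet
  let δ : (V → ℝ) →ₗ[ℝ] (K.edgeSet → ℝ) :=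
    LinearMap.pi fun e => LinearMap.proj (R := ℝ) (φ := fun _ : V => ℝ) e.1.out.1 -
      LinearMap.proj e.1.out.2
  have hker : LinearMap.ker δ ≤ K.constAlongEdges := by
    intro x hx i j hij
    have he := congrFun hx ⟨s(i, j), hij⟩
    have hout : s((s(i, j) : Sym2 V).out.1, (s(i, j) : Sym2 V).out.2) = s(i, j) := Quot.out_eq _
    simp only [δ, LinearMap.pi_apply, LinearMap.sub_apply, LinearMap.proj_apply, Pi.zero_apply,
      sub_eq_zero] at he
    rcases Sym2.eq_iff.1 hout with ⟨h1, h2⟩ | ⟨h1, h2⟩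
    · rwa [h1, h2] at he
    · rw [h1, h2] at he
      exact he.symm
  have hδ := LinearMap.finrank_range_add_finrank_ker δ
  have hrange : finrank ℝ (LinearMap.range δ) ≤ Nat.card K.edgeSet := by
    simpa [finrank_fintype_fun_eq_card, Nat.card_eq_fintype_card] using
      Submodule.finrank_le (LinearMap.range δ)
  rw [finrank_fintype_fun_eq_card] at hδ
  have := Submodule.finrank_mono hker
  rw [Nat.card_eq_fintype_card]
  omega

lemma card_edgeSet_sdiff_add_card_edgeSet {G H : SimpleGraph V} (h : H ≤ G) :
    Nat.card (G \ H).edgeSet + Nat.card H.edgeSet = Nat.card G.edgeSet := by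
  rw [edgeSet_sdiff, Nat.card_coe_set_eq, Nat.card_coe_set_eq, Nat.card_coe_set_eq]
  exact Set.ncard_sdiff_add_ncard_of_subset (edgeSet_mono h)

end SimpleGraph

section WeightedSquares

variable {V : Type*} (a : Matrix V V ℝ) {x : V → ℝ}

lemma sum_mul_sub_sq_nonpos [Fintype V] (h : ∀ i j, i ≠ j → 0 < a i j → x i = x j) :
    ∑ i, ∑ j, a i j * (x i - x j) ^ 2 ≤ 0 := by
  refine Finset.sum_nonpos fun i _ => Finset.sum_nonpos fun j _ => ?_
  rcases eq_or_ne i j with rfl | hij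
  · simp
  by_cases hpos : 0 < a i j
  · simp [h i j hij hpos]
  · exact mul_nonpos_of_nonpos_of_nonneg (not_lt.1 hpos) (sq_nonneg _)

lemma mul_sub_sq_nonneg (h : ∀ i j, i ≠ j → a i j < 0 → x i = x j) (i j : V) :
    0 ≤ a i j * (x i - x j) ^ 2 := by
  rcases eq_or_ne i j with rfl | hij
  · simp
  by_cases hneg : a i j < 0
  · simp [h i j hij hneg]
  · exact mul_nonneg (not_lt.1 hneg) (sq_nonneg _)

lemma eq_of_sum_mul_sub_sq_nonpos [Fintype V] (h : ∀ i j, i ≠ j → a i j < 0 → x i = x j)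
    (hq : ∑ i, ∑ j, a i j * (x i - x j) ^ 2 ≤ 0) {i j : V} (hij : a i j ≠ 0) :
    x i = x j := by
  have hterm := mul_sub_sq_nonneg a h
  have hrow : ∀ i ∈ Finset.univ, 0 ≤ ∑ j, a i j * (x i - x j) ^ 2 :=
    fun i _ => Finset.sum_nonneg fun j _ => hterm i j
  have hzero : a i j * (x i - x j) ^ 2 = 0 :=
    (Finset.sum_eq_zero_iff_of_nonneg fun j _ => hterm i j).1
      ((Finset.sum_eq_zero_iff_of_nonneg hrow).1 (le_antisymm hq (Finset.sum_nonneg hrow)) i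
        (Finset.mem_univ _)) j (Finset.mem_univ _)
  simpa [hij, sub_eq_zero] using hzero

end WeightedSquares

section Inertia

variable {V : Type*} [Finite V] (q : (V → ℝ) → ℝ)

lemma finrank_le_card_edgeSet_of_pos_of_nonpos {P : Submodule ℝ (V → ℝ)}
    (hP : ∀ x ∈ P, x ≠ 0 → 0 < q x) (K : SimpleGraph V)
    (hK : ∀ x ∈ K.constAlongEdges, q x ≤ 0) : finrank ℝ P ≤ Nat.card K.edgeSet := by
  have := Fintype.ofFinite V
  have hdisj : Disjoint P K.constAlongEdges := by
    rw [Submodule.disjoint_def]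
    intro x hxP hxK
    by_contra hx0
    exact (hP x hxP hx0).not_ge (hK x hxK)
  have hsum := Submodule.finrank_add_finrank_le_of_disjoint hdisj
  have hK := K.card_le_finrank_constAlongEdges_add
  rw [finrank_fintype_fun_eq_card, ← Nat.card_eq_fintype_card] at hsum
  omega

lemma finrank_le_card_edgeSet_add_card_connectedComponent {N : Submodule ℝ (V → ℝ)}
    (hN : ∀ x ∈ N, q x ≤ 0) (K L : SimpleGraph V)
    (hKL : ∀ x ∈ K.constAlongEdges, q x ≤ 0 → x ∈ L.constAlongEdges) :
    finrank ℝ N ≤ Nat.card K.edgeSet + Nat.card L.ConnectedComponent := by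
  have := Fintype.ofFinite V
  have hinf : finrank ℝ ↥(K.constAlongEdges ⊓ N) ≤ Nat.card L.ConnectedComponent :=
    (Submodule.finrank_mono (show K.constAlongEdges ⊓ N ≤ L.constAlongEdges from
      fun x hx => hKL x (Submodule.mem_inf.1 hx).1 (hN x (Submodule.mem_inf.1 hx).2))).trans
      L.finrank_constAlongEdges_le
  have hsup : finrank ℝ ↥(K.constAlongEdges ⊔ N) ≤ Nat.card V :=
    (Submodule.finrank_le _).trans_eq
      (by rw [finrank_fintype_fun_eq_card, Nat.card_eq_fintype_card])
  have hsum := Submodule.finrank_sup_add_finrank_inf_eq K.constAlongEdges N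
  have hK := K.card_le_finrank_constAlongEdges_add
  omega

end Inertia

theorem stmt_17_general (n : ℕ) (a : Matrix (Fin n) (Fin n) ℝ)
    (Q : Matrix (Fin n) (Fin n) ℝ) (hQsymm : Q.IsSymm)
    (hQ : ∀ g : Fin n → ℝ, g ⬝ᵥ Q.mulVec g = ∑ i, ∑ j, a i j * (g i - g j) ^ 2)
    (μ : Fin n → ℝ) (hchar : Q.charpoly = ∏ i, (Polynomial.X - Polynomial.C (μ i)))
    (p : ℕ) (hp : p = Nat.card {i : Fin n | 0 < μ i})
    (G : SimpleGraph (Fin n)) (hG : ∀ i j, G.Adj i j ↔ i ≠ j ∧ a i j ≠ 0)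
    (H : SimpleGraph (Fin n)) (hH : ∀ i j, H.Adj i j ↔ i ≠ j ∧ 0 < a i j)
    (T : SimpleGraph (Fin n)) (hTH : T ≤ H)
    (hTspan : ∀ x y, H.Reachable x y → T.Reachable x y) :
    p ≤ Nat.card T.edgeSet ∧ Nat.card T.edgeSet ≤ Nat.card H.edgeSet ∧
      Nat.card H.edgeSet ≤ p + cyclomatic G := by
  have hQh : Q.IsHermitian := isHermitian_iff_isSymm.2 hQsymm
  have hp' : p = Nat.card {i | 0 < hQh.eigenvalues i} := by
    rw [hp]
    exact card_setOf_eq_of_prod_X_sub_C_eq (hchar.symm.trans (by simpa using hQh.charpoly_eq)) _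
  obtain ⟨P, hPdim, hP⟩ := hQh.exists_finrank_eq_card_pos_eigenvalues
  obtain ⟨N, hNdim, hN⟩ := hQh.exists_finrank_add_card_pos_eigenvalues_eq
  have hHG : H ≤ G := fun i j h => (hG i j).2 ⟨((hH i j).1 h).1, ((hH i j).1 h).2.ne'⟩
  have hnull :
      ∀ x ∈ (G \ H).constAlongEdges, x ⬝ᵥ Q *ᵥ x ≤ 0 → x ∈ G.constAlongEdges := by
    intro x hx hq i j hadj
    refine eq_of_sum_mul_sub_sq_nonpos a (fun i j hij hneg => hx ?_) (hQ x ▸ hq)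
      ((hG i j).1 hadj).2
    rw [SimpleGraph.sdiff_adj, hG, hH]
    exact ⟨⟨hij, hneg.ne⟩, fun h => hneg.not_gt h.2⟩
  have hNbound := finrank_le_card_edgeSet_add_card_connectedComponent _ hN (G \ H) G hnull
  refine ⟨?_, Nat.card_mono (Set.toFinite _) (SimpleGraph.edgeSet_mono hTH), ?_⟩
  · rw [hp', ← hPdim]
    refine finrank_le_card_edgeSet_of_pos_of_nonpos _ hP T fun x hx => hQ x ▸ ?_
    exact sum_mul_sub_sq_nonpos a fun i j hij hpos =>
      (hTspan i j ((hH i j).2 ⟨hij, hpos⟩).reachable).eq_of_mem_constAlongEdges hx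
  · have hGH := SimpleGraph.card_edgeSet_sdiff_add_card_edgeSet hHG
    rw [cyclomatic, Nat.card_fin]
    rw [Fintype.card_fin] at hNdim
    omega

/-- for B = Σ a_ij (x_i - x_j)², p ≤ |E(T)| ≤ |E(H)| ≤ p + ℓ(G) for any
spanning forest T of the positive-part subgraph H. -/
theorem stmt_17 (n : ℕ) (a : Matrix (Fin n) (Fin n) ℝ) (ha : ∀ i j, a i j = a j i)
    (Q : Matrix (Fin n) (Fin n) ℝ) (hQsymm : Q.IsSymm)
    (hQ : ∀ g : Fin n → ℝ, g ⬝ᵥ Q.mulVec g = ∑ i, ∑ j, a i j * (g i - g j) ^ 2)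
    (μ : Fin n → ℝ) (hchar : Q.charpoly = ∏ i, (Polynomial.X - Polynomial.C (μ i)))
    (p : ℕ) (hp : p = Nat.card {i : Fin n | 0 < μ i})
    (G : SimpleGraph (Fin n)) (hG : ∀ i j, G.Adj i j ↔ i ≠ j ∧ a i j ≠ 0)
    (H : SimpleGraph (Fin n)) (hH : ∀ i j, H.Adj i j ↔ i ≠ j ∧ 0 < a i j)
    (T : SimpleGraph (Fin n)) (hTH : T ≤ H) (hT : T.IsAcyclic)
    (hTspan : ∀ x y, H.Reachable x y → T.Reachable x y) :
    p ≤ Nat.card T.edgeSet ∧ Nat.card T.edgeSet ≤ Nat.card H.edgeSet ∧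
      Nat.card H.edgeSet ≤ p + cyclomatic G :=
  stmt_17_general n a Q hQsymm hQ μ hchar p hp G hG H hH T hTH hTspan
end

section
/- Let M = (M_{ij}) be an n×n real symmetric matrix and let G = (V,E) be the graph with V = {1,…,n} and E = {{i,j} : i ≠ j and M_{ij} ≠ 0}. If λ is an eigenvalue of M admitting an eigenvector that is nonzero at every vertex, then the multiplicity r of λ satisfies c ≤ r ≤ c + ℓ, where c is the number of connected components of G and ℓ = ℓ(G) := |E| − |V| + c. -/
open Matrix Polynomial

/-!
Let `K` be the `λ`-eigenspace of `M`. Because `f` vanishes nowhere, every `g` can be compared with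
`f` through the discrete Wronskian `W g (i, j) = M i j (f j g i - f i g j)`. The kernel of `W`
consists of the vectors `f h` with `h` constant on the components of `G`; all of them lie in `K`,
which gives `c ≤ r`. For `g ∈ K`, symmetry of `M` and the eigenvalue equations for `f` and `g`
make `W g` a real cycle of `G`, and the cycle space has dimension `|E| - |V| + c = ℓ(G)`: it meets
the image of the coboundary `(V → ℝ) → C₁(G)`, of dimension `|V| - c`, only in `0`, because the
boundary of a coboundary `δ x` is the Laplacian of `x`. Rank–nullity for `W` on `K` then gives
`r ≤ ℓ(G) + c`.
-/

theorem LinearMap.finrank_map_add_finrank_ker_of_ker_le {K E F : Type*} [DivisionRing K]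
    [AddCommGroup E] [Module K E] [FiniteDimensional K E] [AddCommGroup F] [Module K F]
    (φ : E →ₗ[K] F) {p : Submodule K E} (h : LinearMap.ker φ ≤ p) :
    Module.finrank K (p.map φ) + Module.finrank K (LinearMap.ker φ) = Module.finrank K p := by
  rw [← LinearMap.range_domRestrict, ← (Submodule.comapSubtypeEquivOfLe h).finrank_eq,
    ← LinearMap.ker_domRestrict]
  exact LinearMap.finrank_range_add_finrank_ker _

namespace SimpleGraph

variable {V : Type*} (G : SimpleGraph V)

/-- Real `1`-chains of `G`, encoded as skew-symmetric functions on ordered pairs of vertices that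
vanish off the edges. -/
def edgeChains : Submodule ℝ (V → V → ℝ) where
  carrier := {F | (∀ i j, F j i = -F i j) ∧ ∀ i j, ¬G.Adj i j → F i j = 0}
  add_mem' := by
    rintro F F' ⟨hF, hF0⟩ ⟨hF', hF'0⟩
    exact ⟨fun i j => by simp [hF i j, hF' i j, add_comm],
      fun i j h => by simp [hF0 i j h, hF'0 i j h]⟩
  zero_mem' := ⟨fun _ _ => by simp, fun _ _ _ => rfl⟩
  smul_mem' := by
    rintro a F ⟨hF, hF0⟩
    exact ⟨fun i j => by simp [hF i j], fun i j h => by simp [hF0 i j h]⟩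

section Coboundary

variable [DecidableRel G.Adj]

def coboundary : (V → ℝ) →ₗ[ℝ] V → V → ℝ where
  toFun x i j := if G.Adj i j then x i - x j else 0
  map_add' x y := by ext i j; split_ifs <;> simp [*]; ring
  map_smul' a x := by ext i j; split_ifs <;> simp [*, mul_sub]

theorem coboundary_mem_edgeChains (x : V → ℝ) : G.coboundary x ∈ G.edgeChains := by
  refine ⟨fun i j => ?_, fun i j h => if_neg h⟩
  simp only [coboundary, LinearMap.coe_mk, AddHom.coe_mk, G.adj_comm j i]
  split_ifs <;> simp

theorem coboundary_eq_zero_iff (x : V → ℝ) :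
    G.coboundary x = 0 ↔ ∀ i j, G.Adj i j → x i = x j := by
  simp [coboundary, funext_iff, sub_eq_zero]

end Coboundary

variable [Fintype V]

def chainBoundary : (V → V → ℝ) →ₗ[ℝ] V → ℝ where
  toFun F i := ∑ j, F i j
  map_add' F F' := by ext i; simp [Finset.sum_add_distrib]
  map_smul' a F := by ext i; simp [Finset.mul_sum]

def cycleSpace : Submodule ℝ (V → V → ℝ) :=
  G.edgeChains ⊓ LinearMap.ker chainBoundary

theorem finrank_edgeChains_le : Module.finrank ℝ G.edgeChains ≤ Nat.card G.edgeSet := by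
  classical
  let restrict : G.edgeChains →ₗ[ℝ] G.edgeSet → ℝ :=
    (LinearMap.pi fun e : G.edgeSet =>
      LinearMap.proj e.1.out.2 ∘ₗ LinearMap.proj e.1.out.1) ∘ₗ G.edgeChains.subtype
  have hinj : Function.Injective restrict := by
    rw [← LinearMap.ker_eq_bot, Submodule.eq_bot_iff]
    rintro ⟨F, hskew, hsupp⟩ hF
    ext i j
    by_cases hij : G.Adj i j
    · have hout : F (s(i, j)).out.1 (s(i, j)).out.2 = 0 :=
        congrFun (LinearMap.mem_ker.1 hF) ⟨s(i, j), hij⟩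
      have hmk : s((s(i, j)).out.1, (s(i, j)).out.2) = s(i, j) := Quot.out_eq _
      rcases Sym2.eq_iff.1 hmk with ⟨h1, h2⟩ | ⟨h1, h2⟩
      · rwa [h1, h2] at hout
      · rw [h1, h2] at hout
        simpa [hout] using hskew j i
    · exact hsupp i j hij
  simpa [Nat.card_eq_fintype_card] using LinearMap.finrank_le_finrank_of_injective hinj

variable [DecidableEq V] [DecidableRel G.Adj]

theorem chainBoundary_coboundary (x : V → ℝ) :
    chainBoundary (G.coboundary x) = G.lapMatrix ℝ *ᵥ x := by
  ext i
  simp [chainBoundary, coboundary, lapMatrix_mulVec_apply, Finset.sum_ite, Finset.sum_sub_distrib,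
    ← card_neighborFinset_eq_degree, neighborFinset_eq_filter]

theorem finrank_ker_coboundary :
    Module.finrank ℝ (LinearMap.ker G.coboundary) = Fintype.card G.ConnectedComponent := by
  rw [card_connectedComponent_eq_finrank_ker_toLin'_lapMatrix]
  congr 2 <;> ext x <;>
  simp [coboundary_eq_zero_iff, lapMatrix_mulVec_eq_zero_iff_forall_adj]

theorem disjoint_range_coboundary_cycleSpace :
    Disjoint (LinearMap.range G.coboundary) G.cycleSpace := by
  rw [Submodule.disjoint_def]
  rintro _ ⟨x, rfl⟩ ⟨-, hx⟩
  rw [SetLike.mem_coe, LinearMap.mem_ker, chainBoundary_coboundary,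
    lapMatrix_mulVec_eq_zero_iff_forall_adj] at hx
  exact (G.coboundary_eq_zero_iff x).2 hx

theorem finrank_cycleSpace_add_card_le :
    Module.finrank ℝ G.cycleSpace + Fintype.card V
      ≤ Nat.card G.edgeSet + Fintype.card G.ConnectedComponent := by
  have hsup : G.cycleSpace ⊔ LinearMap.range G.coboundary ≤ G.edgeChains :=
    sup_le inf_le_left <| by rintro _ ⟨x, rfl⟩; exact G.coboundary_mem_edgeChains x
  have hinf : G.cycleSpace ⊓ LinearMap.range G.coboundary = ⊥ :=
    (G.disjoint_range_coboundary_cycleSpace.symm).eq_bot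
  have hdim :=
    Submodule.finrank_sup_add_finrank_inf_eq G.cycleSpace (LinearMap.range G.coboundary)
  have hrank := LinearMap.finrank_range_add_finrank_ker G.coboundary
  rw [hinf, finrank_bot] at hdim
  rw [Module.finrank_fintype_fun_eq_card, finrank_ker_coboundary] at hrank
  have := (Submodule.finrank_mono hsup).trans G.finrank_edgeChains_le
  omega

end SimpleGraph

namespace Matrix

variable {V : Type*} (M : Matrix V V ℝ) (f : V → ℝ)

def wronskian : (V → ℝ) →ₗ[ℝ] V → V → ℝ where
  toFun g i j := M i j * (f j * g i - f i * g j)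
  map_add' g h := by ext i j; simp only [Pi.add_apply]; ring
  map_smul' a g := by ext i j; simp only [Pi.smul_apply, smul_eq_mul, RingHom.id_apply]; ring

theorem wronskian_eq_zero_iff {G : SimpleGraph V} (hG : ∀ i j, G.Adj i j ↔ i ≠ j ∧ M i j ≠ 0)
    (hf0 : ∀ i, f i ≠ 0) (g : V → ℝ) :
    M.wronskian f g = 0 ↔ ∀ i j, G.Adj i j → g i / f i = g j / f j := by
  have hcross : ∀ i j, g i / f i = g j / f j ↔ f j * g i - f i * g j = 0 := fun i j => by
    rw [div_eq_div_iff (hf0 i) (hf0 j), sub_eq_zero, mul_comm (f j), mul_comm (f i)]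
  simp only [wronskian, LinearMap.coe_mk, AddHom.coe_mk, funext_iff, Pi.zero_apply, mul_eq_zero,
    hcross]
  refine ⟨fun hW i j hij => (hW i j).resolve_left ((hG i j).1 hij).2, fun hW i j => ?_⟩
  by_cases hij : G.Adj i j
  · exact Or.inr (hW i j hij)
  · by_cases hij' : i = j
    · simp [hij']
    · exact Or.inl (by simpa [hG, hij'] using hij)

variable [Fintype V]

theorem chainBoundary_wronskian (g : V → ℝ) (i : V) :
    SimpleGraph.chainBoundary (M.wronskian f g) i = g i * (M *ᵥ f) i - f i * (M *ᵥ g) i := by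
  simp only [SimpleGraph.chainBoundary, wronskian, LinearMap.coe_mk, AddHom.coe_mk, mulVec,
    dotProduct, Finset.mul_sum, ← Finset.sum_sub_distrib]
  exact Finset.sum_congr rfl fun j _ => by ring

theorem wronskian_mem_cycleSpace {G : SimpleGraph V} (hM : M.IsSymm)
    (hMG : ∀ i j, i ≠ j → M i j ≠ 0 → G.Adj i j) {lam : ℝ} (hf : M *ᵥ f = lam • f)
    {g : V → ℝ} (hg : M *ᵥ g = lam • g) : M.wronskian f g ∈ G.cycleSpace := by
  refine ⟨⟨fun i j => ?_, fun i j hij => ?_⟩, ?_⟩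
  · simp only [wronskian, LinearMap.coe_mk, AddHom.coe_mk, hM.apply]
    ring
  · by_cases hij' : i = j
    · simp [wronskian, hij']
    · have hMij : M i j = 0 := by_contra fun h => hij (hMG i j hij' h)
      simp [wronskian, hMij]
  · ext i
    rw [chainBoundary_wronskian, hf, hg]
    simp only [Pi.smul_apply, smul_eq_mul, Pi.zero_apply]
    ring

theorem mulVec_eq_smul_of_wronskian_eq_zero (hf0 : ∀ i, f i ≠ 0) {lam : ℝ}
    (hf : M *ᵥ f = lam • f) {g : V → ℝ} (hW : M.wronskian f g = 0) : M *ᵥ g = lam • g := by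
  ext i
  have hi := congrFun (congrArg SimpleGraph.chainBoundary hW) i
  rw [chainBoundary_wronskian, hf, map_zero] at hi
  simp only [Pi.smul_apply, smul_eq_mul, Pi.zero_apply] at hi ⊢
  exact mul_left_cancel₀ (hf0 i) (by linarith)

theorem finrank_ker_wronskian [DecidableEq V] {G : SimpleGraph V} [DecidableRel G.Adj]
    (hG : ∀ i j, G.Adj i j ↔ i ≠ j ∧ M i j ≠ 0) (hf0 : ∀ i, f i ≠ 0) :
    Module.finrank ℝ (LinearMap.ker (M.wronskian f)) = Fintype.card G.ConnectedComponent := by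
  let mulByF : (V → ℝ) ≃ₗ[ℝ] V → ℝ :=
    LinearEquiv.piCongrRight fun i => LinearEquiv.smulOfUnit (Units.mk0 (f i) (hf0 i))
  have hker : LinearMap.ker (M.wronskian f)
      = (LinearMap.ker G.coboundary).map (mulByF : (V → ℝ) →ₗ[ℝ] V → ℝ) := by
    ext g
    rw [Submodule.mem_map_equiv, LinearMap.mem_ker, LinearMap.mem_ker,
      wronskian_eq_zero_iff M f hG hf0, G.coboundary_eq_zero_iff]
    simp [mulByF, div_eq_inv_mul, LinearEquiv.smulOfUnit, Units.smul_def]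
  rw [hker, LinearEquiv.finrank_map_eq, G.finrank_ker_coboundary]

theorem mem_ker_mulVecLin_sub_smul_one [DecidableEq V] (lam : ℝ) (g : V → ℝ) :
    g ∈ LinearMap.ker (M - lam • (1 : Matrix V V ℝ)).mulVecLin ↔ M *ᵥ g = lam • g := by
  rw [LinearMap.mem_ker, mulVecLin_apply, sub_mulVec, smul_mulVec, one_mulVec, sub_eq_zero]

end Matrix

theorem stmt_18_general (n : ℕ) (M : Matrix (Fin n) (Fin n) ℝ) (hM : M.IsSymm)
    (G : SimpleGraph (Fin n)) (hG : ∀ i j, G.Adj i j ↔ i ≠ j ∧ M i j ≠ 0)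
    (lam : ℝ) (f : Fin n → ℝ) (heig : M.mulVec f = lam • f)
    (hnz : ∀ x, f x ≠ 0)
    (r : ℕ) (hr : r = Module.finrank ℝ
      (LinearMap.ker (M - lam • (1 : Matrix (Fin n) (Fin n) ℝ)).mulVecLin))
    (c : ℕ) (hc : c = Nat.card G.ConnectedComponent) :
    c ≤ r ∧ r ≤ c + cyclomatic G := by
  classical
  set K := LinearMap.ker (M - lam • (1 : Matrix (Fin n) (Fin n) ℝ)).mulVecLin
  have hker : LinearMap.ker (M.wronskian f) ≤ K := fun g hg =>
    (M.mem_ker_mulVecLin_sub_smul_one lam g).2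
      (M.mulVec_eq_smul_of_wronskian_eq_zero f hnz heig hg)
  have hcycles : K.map (M.wronskian f) ≤ G.cycleSpace := by
    rintro _ ⟨g, hg, rfl⟩
    exact M.wronskian_mem_cycleSpace f hM (fun i j hij hM0 => (hG i j).2 ⟨hij, hM0⟩) heig
      ((M.mem_ker_mulVecLin_sub_smul_one lam g).1 hg)
  have hcard : c = Fintype.card G.ConnectedComponent := by rw [hc, Nat.card_eq_fintype_card]
  have hkerW : Module.finrank ℝ (LinearMap.ker (M.wronskian f)) = c := by
    rw [hcard, M.finrank_ker_wronskian f hG hnz]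
  have hℓ : cyclomatic G = Nat.card G.edgeSet + c - n := by
    rw [cyclomatic, hc, Nat.card_eq_fintype_card (α := Fin n), Fintype.card_fin]
  have hrank := (M.wronskian f).finrank_map_add_finrank_ker_of_ker_le hker
  have hcycle := G.finrank_cycleSpace_add_card_le
  have hmono := Submodule.finrank_mono hcycles
  rw [Fintype.card_fin, ← hcard] at hcycle
  omega

/-- if an eigenvalue has an eigenvector nonzero at every vertex then its
multiplicity r satisfies c ≤ r ≤ c + ℓ(G). -/
theorem stmt_18 (n : ℕ) (M : Matrix (Fin n) (Fin n) ℝ) (hM : M.IsSymm)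
    (G : SimpleGraph (Fin n)) (hG : ∀ i j, G.Adj i j ↔ i ≠ j ∧ M i j ≠ 0)
    (lam : ℝ) (f : Fin n → ℝ) (hf : f ≠ 0) (heig : M.mulVec f = lam • f)
    (hnz : ∀ x, f x ≠ 0)
    (r : ℕ) (hr : r = Module.finrank ℝ
      (LinearMap.ker (M - lam • (1 : Matrix (Fin n) (Fin n) ℝ)).mulVecLin))
    (c : ℕ) (hc : c = Nat.card G.ConnectedComponent) :
    c ≤ r ∧ r ≤ c + cyclomatic G :=
  stmt_18_general n M hM G hG lam f heig hnz r hr c hc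
end

section
/- Let M be an n×n real symmetric matrix with induced signed graph Γ = (G,σ), G = (V,E), and let λ_k be the k-th eigenvalue of M with λ_{k−1} < λ_k, with eigenvector f_k. Then 𝔖(f_k) ≥ k + v_l − 1 − n − z_l + z_r, where v_l is the number of leaves of G (vertices of degree 1), z_l = |{x ∈ V : d_x = 1 and f_k(x) = 0}|, and z_r = |{x ∈ V : d_x = 1, f_k(x) ≠ 0, and f_k(x') = 0 for the unique vertex x' ∼ x}|. -/
open Matrix Polynomial

/-!
Let `λ = μ k` and let `x'` denote the neighbour of a leaf `x`; the eigen-equation at `x` reads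
`(M x x - λ) f x = - M x x' f x'`. Split the leaves with `f x ≠ 0` into those whose edge `x x'` is
an S-step (set `P`) and the others (set `I`, which contains the `z_r` leaves with `f x' = 0`).

Strong nodal domains: each `x ∈ I` is a strong nodal domain `{x}`, and each edge with both ends in
`P` is a strong nodal domain `{x, x'}`; with `R` the smaller ends of such edges, `𝔖 ≥ |I| + |R|`.

Eigenvalues: for the `z_r` leaves and for `P`, the eigen-equation gives `M x x ≥ λ`. On the set
`T` of these leaves minus `R`, no two are adjacent, so `M` is diagonal on `T` with entries `≥ λ`.
The quadratic form of `M - λ` is then nonnegative on the coordinate subspace of `T` and negative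
definite on the span of the eigenvectors below `λ`, so at most `n - |T|` eigenvalues lie below
`λ`, while at least `k` do (`k` is 0-based). Hence `k + z_r + |P| - |R| ≤ n`, and adding
`v_l = z_l + |I| + |P|` gives the bound.
-/
open Finset

theorem Submodule.finrank_add_finrank_le_of_neg_of_nonneg {K E : Type*} [DivisionRing K]
    [AddCommGroup E] [Module K E] [FiniteDimensional K E] (q : E → ℝ) {U W : Submodule K E}
    (hU : ∀ v ∈ U, v ≠ 0 → q v < 0) (hW : ∀ v ∈ W, 0 ≤ q v) :
    Module.finrank K U + Module.finrank K W ≤ Module.finrank K E := by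
  refine Submodule.finrank_add_finrank_le_of_disjoint
    (Submodule.disjoint_def.mpr fun v hvU hvW => ?_)
  by_contra hv
  exact (hU v hvU hv).not_ge (hW v hvW)

lemma Function.ExtendByZero.linearMap_injective {R ι κ : Type*} [Semiring R] {s : κ → ι}
    (hs : Function.Injective s) : Function.Injective (Function.ExtendByZero.linearMap R s) :=
  fun c d h => funext fun k => by simpa [hs.extend_apply] using congrFun h (s k)

namespace Matrix

variable {ι : Type*} [Fintype ι]

lemma dotProduct_mulVec_eq_sum_of_support {R : Type*} [CommSemiring R] {B : Matrix ι ι R}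
    {T : Finset ι} (hB : ∀ x ∈ T, ∀ y ∈ T, x ≠ y → B x y = 0) {v : ι → R}
    (hv : ∀ y ∉ T, v y = 0) :
    v ⬝ᵥ (B *ᵥ v) = ∑ x ∈ T, B x x * (v x * v x) := by
  have hrow : ∀ x ∈ T, (B *ᵥ v) x = B x x * v x := fun x hx => by
    rw [mulVec, dotProduct, ← sum_subset (subset_univ T) fun y _ hy => by rw [hv y hy, mul_zero]]
    exact sum_eq_single x (fun y hy hyx => by rw [hB x hx y hy (Ne.symm hyx), zero_mul])
      fun h => absurd hx h
  rw [dotProduct, ← sum_subset (subset_univ T) fun y _ hy => by rw [hv y hy, zero_mul]]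
  exact sum_congr rfl fun x hx => by rw [hrow x hx]; ring

lemma mulVec_dotProduct_mulVec_mulVec {R : Type*} [CommSemiring R] (P B : Matrix ι ι R)
    (w : ι → R) : (P *ᵥ w) ⬝ᵥ (B *ᵥ (P *ᵥ w)) = w ⬝ᵥ ((Pᵀ * B * P) *ᵥ w) := by
  rw [← mulVec_mulVec, ← mulVec_mulVec, dotProduct_mulVec w, vecMul_transpose]

variable [DecidableEq ι]

lemma dotProduct_sub_smul_mulVec_nonneg {A : Matrix ι ι ℝ} {c : ℝ} {T : Finset ι}
    (hdiag : ∀ x ∈ T, c ≤ A x x) (hoff : ∀ x ∈ T, ∀ y ∈ T, x ≠ y → A x y = 0) {v : ι → ℝ}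
    (hv : ∀ y ∉ T, v y = 0) : 0 ≤ v ⬝ᵥ ((A - c • 1) *ᵥ v) := by
  rw [dotProduct_mulVec_eq_sum_of_support
    (fun x hx y hy hxy => by simp [hxy, hoff x hx y hy hxy]) hv]
  refine sum_nonneg fun x hx => ?_
  simp only [sub_apply, smul_apply, one_apply_eq, smul_eq_mul, mul_one]
  nlinarith [mul_self_nonneg (v x), hdiag x hx]

namespace IsHermitian

variable {A : Matrix ι ι ℝ}

lemma transpose_eigenvectorUnitary_mul_self (hA : A.IsHermitian) :
    (hA.eigenvectorUnitary : Matrix ι ι ℝ)ᵀ * hA.eigenvectorUnitary = 1 := by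
  rw [← conjTranspose_eq_transpose_of_trivial, ← star_eq_conjTranspose, Unitary.coe_star_mul_self]

lemma transpose_eigenvectorUnitary_mul_mul (hA : A.IsHermitian) :
    (hA.eigenvectorUnitary : Matrix ι ι ℝ)ᵀ * A * hA.eigenvectorUnitary =
      diagonal hA.eigenvalues := by
  have := hA.conjStarAlgAut_star_eigenvectorUnitary
  rw [Unitary.conjStarAlgAut_apply, Unitary.coe_star, star_star] at this
  simpa [star_eq_conjTranspose, conjTranspose_eq_transpose_of_trivial] using this

lemma card_lt_eq_card_eigenvalues_lt (hA : A.IsHermitian) {μ : ι → ℝ}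
    (hchar : A.charpoly = ∏ i, (X - C (μ i))) (c : ℝ) :
    #{i | μ i < c} = #{i | hA.eigenvalues i < c} := by
  have hroots : univ.val.map μ = univ.val.map hA.eigenvalues := by
    have := hA.roots_charpoly_eq_eigenvalues
    rwa [hchar, prod_eq_multiset_prod, ← Function.comp_def (fun a => X - C a) μ,
      ← Multiset.map_map, roots_multiset_prod_X_sub_C, RCLike.ofReal_real_eq_id,
      Function.id_comp] at this
  have := congrArg (Multiset.countP (· < c)) hroots
  rwa [Multiset.countP_map, Multiset.countP_map] at this

lemma eigenvectorUnitary_mulVec_dotProduct_neg (hA : A.IsHermitian) {c : ℝ} {w : ι → ℝ}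
    (hw0 : w ≠ 0) (hw : ∀ i, c ≤ hA.eigenvalues i → w i = 0) :
    ((hA.eigenvectorUnitary : Matrix ι ι ℝ) *ᵥ w) ⬝ᵥ
      ((A - c • 1) *ᵥ ((hA.eigenvectorUnitary : Matrix ι ι ℝ) *ᵥ w)) < 0 := by
  set S : Finset ι := {i | hA.eigenvalues i < c}
  have hwS : ∀ i ∉ S, w i = 0 := fun i hi => hw i (by simpa [S] using hi)
  obtain ⟨i, hiS, hwi⟩ : ∃ i ∈ S, w i ≠ 0 := by
    by_contra! h
    exact hw0 (funext fun i => by_cases (h i) (hwS i))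
  rw [mulVec_dotProduct_mulVec_mulVec, Matrix.mul_sub, Matrix.sub_mul, Matrix.mul_smul,
    Matrix.smul_mul, Matrix.mul_one, hA.transpose_eigenvectorUnitary_mul_mul,
    hA.transpose_eigenvectorUnitary_mul_self,
    dotProduct_mulVec_eq_sum_of_support (fun x _ y _ hxy => by simp [hxy]) hwS]
  refine sum_neg' (fun j hj => ?_) ⟨i, hiS, ?_⟩
  · have : hA.eigenvalues j < c := (mem_filter.mp hj).2
    simp only [sub_apply, diagonal_apply_eq, smul_apply, one_apply_eq, smul_eq_mul, mul_one]
    nlinarith [mul_self_nonneg (w j)]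
  · have : hA.eigenvalues i < c := (mem_filter.mp hiS).2
    simp only [sub_apply, diagonal_apply_eq, smul_apply, one_apply_eq, smul_eq_mul, mul_one]
    nlinarith [mul_self_pos.mpr hwi]

theorem card_eigenvalues_lt_add_card_le (hA : A.IsHermitian) {c : ℝ} {T : Finset ι}
    (hdiag : ∀ x ∈ T, c ≤ A x x) (hoff : ∀ x ∈ T, ∀ y ∈ T, x ≠ y → A x y = 0) :
    #{i | hA.eigenvalues i < c} + #T ≤ Fintype.card ι := by
  set P : Matrix ι ι ℝ := (hA.eigenvectorUnitary : Matrix ι ι ℝ)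
  set S : Finset ι := {i | hA.eigenvalues i < c}
  let extend (s : Finset ι) := Function.ExtendByZero.linearMap ℝ ((↑) : s → ι)
  have extend_apply_of_notMem (s : Finset ι) (d : s → ℝ) (y : ι) (hy : y ∉ s) :
      extend s d y = 0 := by
    refine Function.extend_apply' _ _ _ ?_
    rintro ⟨x, rfl⟩
    exact hy x.2
  have hext (s : Finset ι) : Function.Injective (extend s) :=
    Function.ExtendByZero.linearMap_injective Subtype.val_injective
  have hPP : Pᵀ * P = 1 := hA.transpose_eigenvectorUnitary_mul_self
  have hP : Function.Injective P.mulVecLin := fun v w h => by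
    simpa [mulVec_mulVec, hPP] using congrArg (Pᵀ *ᵥ ·) h
  have finrank_range {s : Finset ι} {g : (s → ℝ) →ₗ[ℝ] ι → ℝ} (hg : Function.Injective g) :
      Module.finrank ℝ (LinearMap.range g) = #s := by
    rw [LinearMap.finrank_range_of_inj hg, Module.finrank_fintype_fun_eq_card, Fintype.card_coe]
  have key := Submodule.finrank_add_finrank_le_of_neg_of_nonneg
    (fun v => v ⬝ᵥ ((A - c • 1) *ᵥ v))
    (U := LinearMap.range (P.mulVecLin ∘ₗ extend S)) (W := LinearMap.range (extend T)) ?_ ?_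
  · rwa [finrank_range (hP.comp (hext S)), finrank_range (hext T),
      Module.finrank_fintype_fun_eq_card] at key
  · rintro _ ⟨d, rfl⟩ hv
    refine hA.eigenvectorUnitary_mulVec_dotProduct_neg (fun h => hv (by simp [h])) fun i hi =>
      extend_apply_of_notMem S d i (by simpa [S] using hi)
  · rintro _ ⟨d, rfl⟩
    exact dotProduct_sub_smul_mulVec_nonneg hdiag hoff (extend_apply_of_notMem T d)

end IsHermitian

end Matrix

namespace SimpleGraph

variable {V : Type*} (G : SimpleGraph V)

def IsLeaf (x : V) : Prop := Nat.card (G.neighborSet x) = 1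

open Classical in
noncomputable def leafNeighbor (x : V) : V :=
  if h : ∃ y, G.neighborSet x = {y} then h.choose else x

variable {G}

lemma IsLeaf.adj_iff {x y : V} (hx : G.IsLeaf x) : G.Adj x y ↔ y = G.leafNeighbor x := by
  have h : ∃ y, G.neighborSet x = {y} := Set.ncard_eq_one.mp (by rwa [← Nat.card_coe_set_eq])
  rw [← mem_neighborSet, leafNeighbor, dif_pos h]
  exact Set.ext_iff.mp h.choose_spec y

lemma IsLeaf.adj_leafNeighbor {x : V} (hx : G.IsLeaf x) : G.Adj x (G.leafNeighbor x) :=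
  hx.adj_iff.mpr rfl

end SimpleGraph

open SimpleGraph

section StrongDomains

variable {V : Type*} {G : SimpleGraph V} {σ : V → V → ℝ} {f : V → ℝ}

lemma SWalkStep.apply_left_ne_zero {x y : V} (h : SWalkStep G σ f x y) : f x ≠ 0 :=
  fun h0 => by simpa [h0] using h.2

lemma SWalkStep.apply_right_ne_zero {x y : V} (h : SWalkStep G σ f x y) : f y ≠ 0 :=
  fun h0 => by simpa [h0] using h.2

lemma self_mem_strongClass {x : V} (hx : f x ≠ 0) : x ∈ strongClass G σ f x :=
  ⟨hx, Or.inl rfl⟩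

lemma strongClass_subset {x : V} {C : Set V} (hx : x ∈ C)
    (hC : ∀ u v, SWalkStep G σ f u v → v ∈ C → u ∈ C) : strongClass G σ f x ⊆ C := by
  rintro z ⟨-, rfl | ⟨l, -, hchain, hhead, hlast⟩⟩
  · exact hx
  refine List.IsChain.backwards_induction (· ∈ C) l hchain (fun u v huv hv => hC u v huv hv)
    (fun hl => ?_) z (List.mem_of_mem_head? hhead)
  rwa [List.getLast?_eq_some_getLast hl, Option.some_inj.mp hlast] at *

lemma ncard_le_numStrong [Finite V] [PartialOrder V] {D : Set V}
    (hD : ∀ x ∈ D, IsLeast (strongClass G σ f x) x) : D.ncard ≤ numStrong G σ f := by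
  have hinj : Set.InjOn (strongClass G σ f) D := fun x hx y hy hxy =>
    le_antisymm ((hD x hx).2 (hxy ▸ (hD y hy).1)) ((hD y hy).2 (hxy ▸ (hD x hx).1))
  rw [numStrong, Nat.card_coe_set_eq, ← hinj.ncard_image]
  refine Set.ncard_le_ncard ?_ (Set.toFinite _)
  rintro _ ⟨x, hx, rfl⟩
  exact ⟨x, (hD x hx).1.1, rfl⟩

end StrongDomains

section InducedSignedGraph

variable {V : Type*} {G : SimpleGraph V} {σ : V → V → ℝ} {M : Matrix V V ℝ} {f : V → ℝ}

lemma sWalkStep_iff (hc : Compatible M G σ) {x y : V} :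
    SWalkStep G σ f x y ↔ G.Adj x y ∧ M x y * (f x * f y) < 0 := by
  refine and_congr_right fun hxy => ?_
  have habs : 0 < |M x y| := abs_pos.mpr ((hc.1 x y).mp hxy).2
  rw [hc.2 x y hxy, show f x * -(M x y / |M x y|) * f y = -(M x y * (f x * f y)) / |M x y| by ring,
    div_pos_iff_of_pos_right habs, neg_pos]

lemma sWalkStep_symm (hM : M.IsSymm) (hc : Compatible M G σ) {x y : V}
    (h : SWalkStep G σ f x y) : SWalkStep G σ f y x := by
  rw [sWalkStep_iff hc] at h ⊢
  exact ⟨h.1.symm, by rw [hM.apply, mul_comm (f y)]; exact h.2⟩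

lemma SimpleGraph.IsLeaf.mulVec_apply [Fintype V] (hc : Compatible M G σ) {x : V}
    (hx : G.IsLeaf x) (v : V → ℝ) :
    (M *ᵥ v) x = M x x * v x + M x (G.leafNeighbor x) * v (G.leafNeighbor x) := by
  refine Fintype.sum_eq_add _ _ hx.adj_leafNeighbor.ne fun y ⟨hyx, hynb⟩ => ?_
  have : M x y = 0 := by
    by_contra h
    exact hynb (hx.adj_iff.mp ((hc.1 x y).mpr ⟨Ne.symm hyx, h⟩))
  simp [this]

lemma SimpleGraph.IsLeaf.le_diag_of_mulVec_eq [Fintype V] (hc : Compatible M G σ) {x : V}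
    (hx : G.IsLeaf x) {c : ℝ} (heig : M *ᵥ f = c • f) (hfx : f x ≠ 0)
    (hsign : M x (G.leafNeighbor x) * (f x * f (G.leafNeighbor x)) ≤ 0) : c ≤ M x x := by
  have hrow := hx.mulVec_apply hc f
  rw [heig, Pi.smul_apply, smul_eq_mul] at hrow
  have : (M x x - c) * (f x * f x) = -(M x (G.leafNeighbor x) * (f x * f (G.leafNeighbor x))) := by
    linear_combination f x * hrow.symm
  nlinarith [mul_self_pos.mpr hfx]

end InducedSignedGraph

section LeafClasses

variable {V : Type*} (G : SimpleGraph V) (σ : V → V → ℝ) (f : V → ℝ)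

def isolatedLeaves : Set V :=
  {x | G.IsLeaf x ∧ f x ≠ 0 ∧ ¬SWalkStep G σ f x (G.leafNeighbor x)}

def linkedLeaves : Set V :=
  {x | G.IsLeaf x ∧ SWalkStep G σ f x (G.leafNeighbor x)}

def pairedLeaves [LinearOrder V] : Set V :=
  {x | x ∈ linkedLeaves G σ f ∧ G.IsLeaf (G.leafNeighbor x) ∧ x < G.leafNeighbor x}

def leavesWithZeroNeighbor : Set V :=
  {x | G.IsLeaf x ∧ f x ≠ 0 ∧ ∀ y, G.Adj x y → f y = 0}

variable {G σ f}

lemma ncard_setOf_isLeaf [Finite V] :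
    {x | G.IsLeaf x}.ncard =
      {x | G.IsLeaf x ∧ f x = 0}.ncard + (isolatedLeaves G σ f).ncard
        + (linkedLeaves G σ f).ncard := by
  have hsplit : {x | G.IsLeaf x} =
      ({x | G.IsLeaf x ∧ f x = 0} ∪ isolatedLeaves G σ f) ∪ linkedLeaves G σ f := by
    ext x
    simp only [isolatedLeaves, linkedLeaves, Set.mem_union, Set.mem_ofPred_eq]
    tauto
  have hdisj₁ : Disjoint {x | G.IsLeaf x ∧ f x = 0} (isolatedLeaves G σ f) :=
    Set.disjoint_left.mpr fun x h h' => h'.2.1 h.2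
  have hdisj₂ : Disjoint ({x | G.IsLeaf x ∧ f x = 0} ∪ isolatedLeaves G σ f)
      (linkedLeaves G σ f) := by
    refine Set.disjoint_left.mpr fun x h h' => ?_
    rcases h with h | h
    · simpa [h.2] using h'.2.2
    · exact h.2.2 h'.2
  rw [hsplit, Set.ncard_union_eq hdisj₂, Set.ncard_union_eq hdisj₁]

lemma pairedLeaves_subset [LinearOrder V] : pairedLeaves G σ f ⊆ linkedLeaves G σ f :=
  fun _ h => h.1

lemma disjoint_leavesWithZeroNeighbor_linkedLeaves :
    Disjoint (leavesWithZeroNeighbor G f) (linkedLeaves G σ f) :=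
  Set.disjoint_left.mpr fun _ h h' => h'.2.apply_right_ne_zero (h.2.2 _ h'.1.adj_leafNeighbor)

lemma disjoint_isolatedLeaves_linkedLeaves :
    Disjoint (isolatedLeaves G σ f) (linkedLeaves G σ f) :=
  Set.disjoint_left.mpr fun _ h h' => h.2.2 h'.2

end LeafClasses

section DomainCount

variable {V : Type*} [LinearOrder V] {G : SimpleGraph V} {σ : V → V → ℝ} {M : Matrix V V ℝ}
  {f : V → ℝ}

lemma isLeast_strongClass_of_mem_isolatedLeaves (hM : M.IsSymm) (hc : Compatible M G σ) {x : V}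
    (hx : x ∈ isolatedLeaves G σ f) : IsLeast (strongClass G σ f x) x := by
  obtain ⟨hleaf, hfx, hnostep⟩ := hx
  refine ⟨self_mem_strongClass hfx, fun z hz => ?_⟩
  suffices strongClass G σ f x ⊆ {x} from (this hz).ge
  refine strongClass_subset rfl fun u v huv hv => ?_
  subst hv
  refine absurd (sWalkStep_symm hM hc huv) ?_
  rwa [hleaf.adj_iff.mp huv.1.symm]

lemma isLeast_strongClass_of_mem_pairedLeaves {x : V} (hx : x ∈ pairedLeaves G σ f) :
    IsLeast (strongClass G σ f x) x := by
  obtain ⟨⟨hleaf, hstep⟩, hleaf', hlt⟩ := hx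
  refine ⟨self_mem_strongClass hstep.apply_left_ne_zero, fun z hz => ?_⟩
  suffices strongClass G σ f x ⊆ {x, G.leafNeighbor x} by
    rcases this hz with rfl | rfl
    exacts [le_rfl, hlt.le]
  refine strongClass_subset (Set.mem_insert _ _) fun u v huv hv => ?_
  rcases hv with rfl | rfl
  · exact Or.inr (hleaf.adj_iff.mp huv.1.symm)
  · exact Or.inl ((hleaf'.adj_iff.mp huv.1.symm).trans
      (hleaf'.adj_iff.mp hleaf.adj_leafNeighbor.symm).symm)

lemma ncard_add_ncard_le_numStrong [Finite V] (hM : M.IsSymm) (hc : Compatible M G σ) :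
    (isolatedLeaves G σ f).ncard + (pairedLeaves G σ f).ncard ≤ numStrong G σ f := by
  rw [← Set.ncard_union_eq (disjoint_isolatedLeaves_linkedLeaves.mono_right pairedLeaves_subset)]
  refine ncard_le_numStrong fun x hx => hx.elim ?_ ?_
  exacts [isLeast_strongClass_of_mem_isolatedLeaves hM hc,
    isLeast_strongClass_of_mem_pairedLeaves]

end DomainCount

lemma card_eigenvalues_lt_add_ncard_le {V : Type*} [Fintype V] [DecidableEq V] [LinearOrder V]
    {G : SimpleGraph V} {σ : V → V → ℝ} {M : Matrix V V ℝ} {f : V → ℝ} (hA : M.IsHermitian)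
    (hc : Compatible M G σ) {c : ℝ} (heig : M *ᵥ f = c • f) :
    #{i | hA.eigenvalues i < c} +
        (leavesWithZeroNeighbor G f ∪ (linkedLeaves G σ f \ pairedLeaves G σ f)).ncard ≤
      Fintype.card V := by
  classical
  set T := leavesWithZeroNeighbor G f ∪ (linkedLeaves G σ f \ pairedLeaves G σ f)
  have hT : ∀ x ∈ T, G.IsLeaf x ∧ f x ≠ 0 := by
    rintro x (h | ⟨⟨hleaf, hstep⟩, -⟩)
    exacts [⟨h.1, h.2.1⟩, ⟨hleaf, hstep.apply_left_ne_zero⟩]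
  have hdiag : ∀ x ∈ T.toFinset, c ≤ M x x := by
    intro x hx
    rw [Set.mem_toFinset] at hx
    refine (hT x hx).1.le_diag_of_mulVec_eq hc heig (hT x hx).2 ?_
    rcases hx with h | ⟨⟨-, hstep⟩, -⟩
    · simp [h.2.2 _ h.1.adj_leafNeighbor]
    · exact ((sWalkStep_iff hc).mp hstep).2.le
  have hoff : ∀ x ∈ T.toFinset, ∀ y ∈ T.toFinset, x ≠ y → M x y = 0 := by
    intro x hx y hy hxy
    rw [Set.mem_toFinset] at hx hy
    by_contra hMxy
    have hadj : G.Adj x y := (hc.1 x y).mpr ⟨hxy, hMxy⟩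
    obtain ⟨hxleaf, hfx⟩ := hT x hx
    obtain ⟨hyleaf, hfy⟩ := hT y hy
    have hy_nb : y = G.leafNeighbor x := hxleaf.adj_iff.mp hadj
    have hx_nb : x = G.leafNeighbor y := hyleaf.adj_iff.mp hadj.symm
    rcases hx with hx | ⟨hxlink, hxpair⟩
    · exact hfy (hx.2.2 y hadj)
    rcases hy with hy | ⟨hylink, hypair⟩
    · exact hfx (hy.2.2 x hadj.symm)
    rcases lt_or_gt_of_ne hxy with h | h
    · exact hxpair ⟨hxlink, hy_nb ▸ hyleaf, hy_nb ▸ h⟩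
    · exact hypair ⟨hylink, hx_nb ▸ hxleaf, hx_nb ▸ h⟩
  simpa [Set.ncard_eq_toFinset_card'] using hA.card_eigenvalues_lt_add_card_le hdiag hoff
theorem stmt_19_general (n : ℕ) (M : Matrix (Fin n) (Fin n) ℝ) (hM : M.IsSymm)
    (G : SimpleGraph (Fin n)) (σ : Fin n → Fin n → ℝ)
    (hcompat : Compatible M G σ)
    (μ : Fin n → ℝ)
    (hchar : M.charpoly = ∏ i, (Polynomial.X - Polynomial.C (μ i)))
    (k : Fin n) (hsep : ∀ j, j < k → μ j < μ k)
    (f : Fin n → ℝ) (heig : M.mulVec f = μ k • f)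
    (vl : ℕ) (hvl : vl = Nat.card {x : Fin n | Nat.card (G.neighborSet x) = 1})
    (zl : ℕ) (hzl : zl = Nat.card {x : Fin n |
      Nat.card (G.neighborSet x) = 1 ∧ f x = 0})
    (zr : ℕ) (hzr : zr = Nat.card {x : Fin n |
      Nat.card (G.neighborSet x) = 1 ∧ f x ≠ 0 ∧ ∀ y, G.Adj x y → f y = 0}) :
    (k : ℕ) + 1 + vl + zr ≤ numStrong G σ f + 1 + n + zl := by
  have hA : M.IsHermitian := isHermitian_iff_isSymm.mpr hM
  have hk : (k : ℕ) ≤ #{i | hA.eigenvalues i < μ k} := by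
    rw [← hA.card_lt_eq_card_eigenvalues_lt hchar, ← Fin.card_Iio]
    exact card_le_card fun j hj => mem_filter.mpr ⟨mem_univ j, hsep j (mem_Iio.mp hj)⟩
  have hspec := card_eigenvalues_lt_add_ncard_le hA hcompat heig
  rw [Set.ncard_union_eq (disjoint_leavesWithZeroNeighbor_linkedLeaves.mono_right Set.sdiff_subset),
    Set.ncard_sdiff pairedLeaves_subset] at hspec
  have hpaired := Set.ncard_le_ncard (pairedLeaves_subset (G := G) (σ := σ) (f := f))
  have hdom := ncard_add_ncard_le_numStrong (f := f) hM hcompat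
  have hleaves := ncard_setOf_isLeaf (G := G) (σ := σ) (f := f)
  have hvl' : vl = {x | G.IsLeaf x}.ncard := hvl.trans (Nat.card_coe_set_eq _)
  have hzl' : zl = {x | G.IsLeaf x ∧ f x = 0}.ncard := hzl.trans (Nat.card_coe_set_eq _)
  have hzr' : zr = (leavesWithZeroNeighbor G f).ncard := hzr.trans (Nat.card_coe_set_eq _)
  rw [Fintype.card_fin] at hspec
  omega

/-- leaf lower bound 𝔖(f_k) ≥ k + v_l - 1 - n - z_l + z_r
(1-based k; here k is 0-based, stated as ↑k + 1 + v_l + z_r ≤ 𝔖(f_k) + 1 + n + z_l). -/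
theorem stmt_19 (n : ℕ) (M : Matrix (Fin n) (Fin n) ℝ) (hM : M.IsSymm)
    (G : SimpleGraph (Fin n)) (σ : Fin n → Fin n → ℝ)
    (hσ : IsSignature G σ) (hcompat : Compatible M G σ)
    (μ : Fin n → ℝ) (hmono : Monotone μ)
    (hchar : M.charpoly = ∏ i, (Polynomial.X - Polynomial.C (μ i)))
    (k : Fin n) (hsep : ∀ j, j < k → μ j < μ k)
    (f : Fin n → ℝ) (hf : f ≠ 0) (heig : M.mulVec f = μ k • f)
    (vl : ℕ) (hvl : vl = Nat.card {x : Fin n | Nat.card (G.neighborSet x) = 1})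
    (zl : ℕ) (hzl : zl = Nat.card {x : Fin n |
      Nat.card (G.neighborSet x) = 1 ∧ f x = 0})
    (zr : ℕ) (hzr : zr = Nat.card {x : Fin n |
      Nat.card (G.neighborSet x) = 1 ∧ f x ≠ 0 ∧ ∀ y, G.Adj x y → f y = 0}) :
    (k : ℕ) + 1 + vl + zr ≤ numStrong G σ f + 1 + n + zl :=
  stmt_19_general n M hM G σ hcompat μ hchar k hsep f heig vl hvl zl hzl zr hzr
end
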